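/- arXiv:2103.06588 — 5 statements merged into one kernel-verified Lean document; each statement's English description precedes it below -/
import Mathlib

section
/- The matrix of τ_d applied to the upper-triangular unipotent element [[1,a],[0,1]] in the standard basis is the d×d upper triangular matrix whose (k,j) entry equals binom(j−1, k−1) a^{j−k} for 1 ≤ k ≤ j ≤ d, and 0 for k > j. Moreover, when a > 0, this matrix is totally positive with respect to the standard basis: every minor of this upper triangular matrix that is not forced to vanish by upper-triangularity is strictly positive. -/
/-! `τ_d [[1,a],[0,1]]` is the matrix of `p(X) ↦ p(X + a)` on polynomials of degree `< d` in the
monomial basis: its `j`-th column holds the coefficients of `(X + a)^j`. It is reached from the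
identity by `d - 1` rounds of column operations: round `r` (counting from `0`) adds `a` times
column `j - 1` to column `j` for every `j > r`, which by
`X^e (X + a)^(r+1) = X^(e+1) (X + a)^r + a X^e (X + a)^r` turns the columns
`X^(j - min j r) (X + a)^(min j r)` into those for `r + 1`.

Expanding a minor multilinearly in its columns, one round writes it as a sum, over the sets `s` of
columns moved one step left, of `a^#s` times a minor of the previous stage. So all minors with
increasing rows and columns stay nonnegative, and after `r` rounds every minor with
`I ≤ J ≤ I + r` is positive: in the next round, the term for the set `s` of columns with
`J m = I m + r + 1` is `a^#s` times such a minor of the previous stage. -/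

/-- The standard irreducible `d`-dimensional representation `τ_d` of `2 × 2` real matrices,
given by the induced action on `Sym^{d-1}(ℝ²)`: the basis vector of index `i` (0-based)
corresponds to the monomial `e₁^{d-1-i} e₂^{i}`, and the `(i,j)` entry of `τ_d g` is the
coefficient of `e₁^{d-1-i} e₂^{i}` in `(g·e₁)^{d-1-j} (g·e₂)^{j}`,
where `g·e₁ = g₀₀ e₁ + g₁₀ e₂` and `g·e₂ = g₀₁ e₁ + g₁₁ e₂`. -/
def tauRep (d : ℕ) (g : Matrix (Fin 2) (Fin 2) ℝ) : Matrix (Fin d) (Fin d) ℝ :=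
  Matrix.of fun i j : Fin d =>
    ∑ l ∈ Finset.range d,
      if l ≤ d - 1 - (i : ℕ) then
        ((d - 1 - (j : ℕ)).choose l : ℝ) * g 0 0 ^ l * g 1 0 ^ (d - 1 - (j : ℕ) - l) *
          ((j : ℕ).choose (d - 1 - (i : ℕ) - l) : ℝ) * g 0 1 ^ (d - 1 - (i : ℕ) - l) *
          g 1 1 ^ ((j : ℕ) - (d - 1 - (i : ℕ) - l))
      else 0

/-- A matrix is (unipotent) totally positive with respect to the standard basis if it is
upper triangular and every minor not forced to vanish by upper-triangularity (i.e. every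
minor with strictly increasing row indices `I` and column indices `J` satisfying
`I l ≤ J l` for all `l`) is strictly positive. -/
def IsTotallyPositiveUpper {d : ℕ} (M : Matrix (Fin d) (Fin d) ℝ) : Prop :=
  (∀ i j : Fin d, j < i → M i j = 0) ∧
  ∀ (k : ℕ) (I J : Fin k → Fin d), StrictMono I → StrictMono J → (∀ l, I l ≤ J l) →
    0 < (M.submatrix I J).det

open Matrix Polynomial

theorem Matrix.det_add_mul_diagonal_eq_sum {R n : Type*} [CommRing R] [Fintype n] [DecidableEq n]
    (M N : Matrix n n R) (c : n → R) :
    (M + N * diagonal c).det =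
      ∑ s : Finset n,
        (∏ j ∈ s, c j) * (of fun i j => if j ∈ s then N i j else M i j).det := by
  let D : (n → R) [⋀^n]→ₗ[R] R := detRowAlternating
  let P (s : Finset n) : n → n → R := fun j i => if j ∈ s then N i j else M i j
  have hcols : (M + N * diagonal c)ᵀ = (fun j => c j • P .univ j) + P ∅ := by
    ext j i; simp [P, mul_comm, add_comm]
  have hpiece (s : Finset n) :
      s.piecewise (fun j => c j • P .univ j) (P ∅) =
        s.piecewise (fun j => c j • P s j) (P s) := by
    ext j i; by_cases hj : j ∈ s <;> simp [hj, P]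
  calc (M + N * diagonal c).det = D ((fun j => c j • P .univ j) + P ∅) := by
        rw [← det_transpose, hcols]; rfl
    _ = _ := by
        rw [D.map_add_univ]
        refine Finset.sum_congr rfl fun s _ => ?_
        rw [hpiece, ← det_transpose]
        exact D.map_piecewise_smul c (P s) s

section ColumnOperations

variable {R : Type*} [CommRing R] {d : ℕ}

def Fin.predSat (j : Fin d) : Fin d := ⟨j - 1, (Nat.sub_le _ _).trans_lt j.isLt⟩

theorem StrictMono.monotone_ite_predSat {k : ℕ} {J : Fin k → Fin d} (hJ : StrictMono J)
    (s : Finset (Fin k)) : Monotone fun m => if m ∈ s then (J m).predSat else J m := by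
  intro m m' h
  rcases h.eq_or_lt with rfl | h
  · rfl
  have := Fin.lt_def.1 (hJ h)
  simp only [Fin.le_def, Fin.predSat]
  split_ifs <;> simp <;> omega

/-- Column `0` is added to itself, `c 0` times, since `Fin.predSat 0 = 0`. -/
def addPrevCol (A : Matrix (Fin d) (Fin d) R) (c : Fin d → R) : Matrix (Fin d) (Fin d) R :=
  of fun i j => A i j + c j * A i j.predSat

def taylorShiftMatrix (a : R) (d : ℕ) : Matrix (Fin d) (Fin d) R :=
  of fun i j : Fin d =>
    if (i : ℕ) ≤ (j : ℕ) then ((j : ℕ).choose (i : ℕ) : R) * a ^ ((j : ℕ) - (i : ℕ))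
    else 0

noncomputable def partialTaylor (a : R) (d r : ℕ) : Matrix (Fin d) (Fin d) R :=
  of fun i j : Fin d => (X ^ (j - min (j : ℕ) r) * (X + C a) ^ min (j : ℕ) r : R[X]).coeff i

variable {a : R}

theorem partialTaylor_zero : partialTaylor a d 0 = 1 := by
  ext i j
  simp [partialTaylor, one_apply, coeff_X_pow, Fin.ext_iff]

theorem partialTaylor_succ (r : ℕ) :
    partialTaylor a d (r + 1) =
      addPrevCol (partialTaylor a d r) fun j => if r < j then a else 0 := by
  ext i j
  simp only [partialTaylor, addPrevCol, Fin.predSat, of_apply]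
  split_ifs with hrj
  · obtain ⟨e, he⟩ : ∃ e, (j : ℕ) = r + 1 + e := ⟨j - (r + 1), by omega⟩
    have hpascal : (X ^ e * (X + C a) ^ (r + 1) : R[X]) =
        X ^ (e + 1) * (X + C a) ^ r + C a * (X ^ e * (X + C a) ^ r) := by ring
    rw [show j - 1 - min (j - 1 : ℕ) r = e by omega, show min (j - 1 : ℕ) r = r by omega,
      show j - min (j : ℕ) (r + 1) = e by omega, show min (j : ℕ) (r + 1) = r + 1 by omega,
      show j - min (j : ℕ) r = e + 1 by omega, show min (j : ℕ) r = r by omega,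
      hpascal, coeff_add, coeff_C_mul]
  · rw [zero_mul, add_zero, show min (j : ℕ) (r + 1) = min (j : ℕ) r by omega]

theorem partialTaylor_eq_taylorShiftMatrix :
    partialTaylor a d (d - 1) = taylorShiftMatrix a d := by
  ext i j
  have hj : min (j : ℕ) (d - 1) = j := min_eq_left (by omega)
  simp only [partialTaylor, taylorShiftMatrix, of_apply, hj, Nat.sub_self, pow_zero, one_mul,
    coeff_X_add_C_pow]
  split_ifs with hij
  · ring
  · simp [Nat.choose_eq_zero_of_lt (not_le.1 hij)]

end ColumnOperations

section TotallyNonneg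

variable {R : Type*} [CommRing R] [PartialOrder R] {d : ℕ}

def IsTotallyNonneg (A : Matrix (Fin d) (Fin d) R) : Prop :=
  ∀ (k : ℕ) (I J : Fin k → Fin d), StrictMono I → StrictMono J →
    0 ≤ (A.submatrix I J).det

theorem IsTotallyNonneg.det_submatrix_nonneg_of_monotone {A : Matrix (Fin d) (Fin d) R}
    (hA : IsTotallyNonneg A) {k : ℕ} {I J : Fin k → Fin d} (hI : StrictMono I)
    (hJ : Monotone J) : 0 ≤ (A.submatrix I J).det := by
  by_cases hinj : Function.Injective J
  · exact hA k I J hI (hJ.strictMono_of_injective hinj)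
  · obtain ⟨m, m', hJm, hne⟩ : ∃ m m', J m = J m' ∧ m ≠ m' := by
      simpa [Function.Injective] using hinj
    rw [det_zero_of_column_eq hne fun l => by simp [hJm]]

variable [IsOrderedRing R]

theorem isTotallyNonneg_one : IsTotallyNonneg (1 : Matrix (Fin d) (Fin d) R) := by
  intro k I J hI hJ
  by_cases hIJ : J = I
  · rw [hIJ, submatrix_one _ hI.injective, det_one]
    exact zero_le_one
  obtain ⟨m, hm⟩ : ∃ m, J m ∉ Set.range I := by
    by_contra! hsub
    have himage : Finset.univ.image J = Finset.univ.image I :=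
      Finset.eq_of_subset_of_card_le
        (fun x hx => by obtain ⟨m, -, rfl⟩ := Finset.mem_image.1 hx; simpa using hsub m)
        (by rw [Finset.card_image_of_injective _ hI.injective,
          Finset.card_image_of_injective _ hJ.injective])
    refine hIJ ((hJ.range_inj hI).1 ?_)
    simpa [Set.image_univ] using congrArg (fun s : Finset (Fin d) => (s : Set (Fin d))) himage
  refine (det_eq_zero_of_column_eq_zero m fun l => ?_).ge
  exact one_apply_ne fun h : I l = J m => hm ⟨l, h⟩

theorem IsTotallyNonneg.le_det_submatrix_addPrevCol {A : Matrix (Fin d) (Fin d) R}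
    (hA : IsTotallyNonneg A) {c : Fin d → R} (hc : 0 ≤ c) {k : ℕ} {I J : Fin k → Fin d}
    (hI : StrictMono I) (hJ : StrictMono J) (s : Finset (Fin k)) :
    (∏ m ∈ s, c (J m)) * (A.submatrix I fun m => if m ∈ s then (J m).predSat else J m).det ≤
      ((addPrevCol A c).submatrix I J).det := by
  have hsplit : (addPrevCol A c).submatrix I J =
      A.submatrix I J + A.submatrix I (fun m => (J m).predSat) * diagonal (c ∘ J) := by
    ext l m; simp [addPrevCol, mul_comm]
  have hterm (t : Finset (Fin k)) : (of fun l m => if m ∈ t then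
      A.submatrix I (fun m => (J m).predSat) l m else A.submatrix I J l m) =
      A.submatrix I fun m => if m ∈ t then (J m).predSat else J m := by
    ext l m; simp only [of_apply, submatrix_apply]; split_ifs <;> rfl
  rw [hsplit, det_add_mul_diagonal_eq_sum]
  simp only [hterm, Function.comp_apply]
  exact Finset.single_le_sum (f := fun t => (∏ m ∈ t, c (J m)) *
      (A.submatrix I fun m => if m ∈ t then (J m).predSat else J m).det)
    (fun t _ => mul_nonneg (Finset.prod_nonneg fun m _ => hc (J m))
      (hA.det_submatrix_nonneg_of_monotone hI (hJ.monotone_ite_predSat t)))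
    (Finset.mem_univ s)

theorem IsTotallyNonneg.addPrevCol {A : Matrix (Fin d) (Fin d) R} (hA : IsTotallyNonneg A)
    {c : Fin d → R} (hc : 0 ≤ c) : IsTotallyNonneg (addPrevCol A c) := fun k I J hI hJ =>
  (hA k I J hI hJ).trans (by simpa using hA.le_det_submatrix_addPrevCol hc hI hJ ∅)

theorem isTotallyNonneg_partialTaylor {a : R} (ha : 0 ≤ a) (r : ℕ) :
    IsTotallyNonneg (partialTaylor a d r) := by
  induction r with
  | zero => rw [partialTaylor_zero]; exact isTotallyNonneg_one
  | succ r ih =>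
    rw [partialTaylor_succ]
    exact ih.addPrevCol fun j => by dsimp only; split_ifs <;> simp [ha]

end TotallyNonneg

theorem det_submatrix_partialTaylor_pos {R : Type*} [CommRing R] [PartialOrder R]
    [IsStrictOrderedRing R] {d : ℕ} {a : R} (ha : 0 < a) (r : ℕ) {k : ℕ}
    {I J : Fin k → Fin d}
    (hI : StrictMono I) (hJ : StrictMono J) (hIJ : ∀ m, I m ≤ J m)
    (hJI : ∀ m, (J m : ℕ) ≤ I m + r) : 0 < ((partialTaylor a d r).submatrix I J).det := by
  induction r generalizing J with
  | zero =>
    obtain rfl : J = I := funext fun m => Fin.ext (by have := Fin.le_def.1 (hIJ m); grind)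
    rw [partialTaylor_zero, submatrix_one _ hI.injective, det_one]
    exact zero_lt_one
  | succ r ih =>
    let s := Finset.univ.filter fun m => (J m : ℕ) = I m + r + 1
    let J' := fun m => if m ∈ s then (J m).predSat else J m
    have hJ'val (m : Fin k) :
        (J' m : ℕ) = if (J m : ℕ) = I m + r + 1 then (J m : ℕ) - 1 else J m := by
      simp only [J', s, Finset.mem_filter, Finset.mem_univ, true_and]
      split_ifs <;> rfl
    have hJ' : StrictMono J' := fun m m' h => by
      have := hI h; have := hJ h; have := hJI m; have := hJ'val m; have := hJ'val m'
      simp only [Fin.lt_def] at *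
      split_ifs at * <;> omega
    have hIJ' (m : Fin k) : I m ≤ J' m := by
      have := hIJ m; have := hJ'val m
      simp only [Fin.le_def] at *
      split_ifs at * <;> omega
    have hJ'I (m : Fin k) : (J' m : ℕ) ≤ I m + r := by
      have := hJI m; have := hJ'val m
      split_ifs at * <;> omega
    let c : Fin d → R := fun j => if r < j then a else 0
    have hc : 0 ≤ c := fun j => by dsimp only [c]; split_ifs <;> simp [ha.le]
    have hcoeff : ∏ m ∈ s, c (J m) = a ^ s.card :=
      Finset.prod_eq_pow_card fun m hm => if_pos (by simp [s] at hm; omega)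
    calc 0 < a ^ s.card * ((partialTaylor a d r).submatrix I J').det :=
          mul_pos (pow_pos ha _) (ih hJ' hIJ' hJ'I)
      _ ≤ _ := by
        rw [partialTaylor_succ, ← hcoeff]
        exact (isTotallyNonneg_partialTaylor ha.le r).le_det_submatrix_addPrevCol hc hI hJ s

theorem isTotallyPositiveUpper_taylorShiftMatrix {d : ℕ} {a : ℝ} (ha : 0 < a) :
    IsTotallyPositiveUpper (taylorShiftMatrix a d) := by
  refine ⟨fun i j hji => if_neg (not_le.2 hji), fun k I J hI hJ hIJ => ?_⟩
  rw [← partialTaylor_eq_taylorShiftMatrix]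
  exact det_submatrix_partialTaylor_pos ha (d - 1) hI hJ hIJ fun m => by omega

theorem tauRep_unipotent_eq_taylorShiftMatrix (d : ℕ) (a : ℝ) :
    tauRep d !![1, a; 0, 1] = taylorShiftMatrix a d := by
  ext i j
  simp only [tauRep, taylorShiftMatrix, of_apply, cons_val', cons_val_zero, cons_val_one,
    empty_val', cons_val_fin_one, one_pow, mul_one]
  have hj := j.isLt
  rw [Finset.sum_eq_single_of_mem (d - 1 - j) (Finset.mem_range.2 (by omega))]
  · by_cases hij : (i : ℕ) ≤ j
    · rw [if_pos (by omega), if_pos hij, Nat.sub_self, pow_zero, Nat.choose_self,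
        show d - 1 - i - (d - 1 - j) = j - i by omega, Nat.choose_symm hij]
      ring
    · rw [if_neg (by omega), if_neg hij]
  · intro l _ hl
    split_ifs
    · rcases hl.lt_or_gt with hlt | hgt
      · simp [zero_pow (show d - 1 - j - l ≠ 0 by omega)]
      · simp [Nat.choose_eq_zero_of_lt hgt]
    · rfl

theorem tauRep_unipotent_eq_and_totallyPositive_general (d : ℕ) (a : ℝ) :
    tauRep d !![1, a; 0, 1] =
      (Matrix.of fun i j : Fin d =>
        if (i : ℕ) ≤ (j : ℕ) then ((j : ℕ).choose (i : ℕ) : ℝ) * a ^ ((j : ℕ) - (i : ℕ))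
        else 0) ∧
    (0 < a → IsTotallyPositiveUpper (tauRep d !![1, a; 0, 1])) := by
  rw [tauRep_unipotent_eq_taylorShiftMatrix]
  exact ⟨rfl, isTotallyPositiveUpper_taylorShiftMatrix⟩

/-- The matrix of `τ_d` on the unipotent element `[[1,a],[0,1]]` is the upper triangular
matrix with (1-based) `(k,j)` entry `binom(j−1, k−1) a^{j−k}` for `k ≤ j`, and `0` for
`k > j`; moreover, when `a > 0` this matrix is totally positive with respect to the
standard basis. -/
theorem tauRep_unipotent_eq_and_totallyPositive (d : ℕ) (hd : 1 ≤ d) (a : ℝ) :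
    tauRep d !![1, a; 0, 1] =
      (Matrix.of fun i j : Fin d =>
        if (i : ℕ) ≤ (j : ℕ) then ((j : ℕ).choose (i : ℕ) : ℝ) * a ^ ((j : ℕ) - (i : ℕ))
        else 0) ∧
    (0 < a → IsTotallyPositiveUpper (tauRep d !![1, a; 0, 1])) :=
  tauRep_unipotent_eq_and_totallyPositive_general d a
end

section
/- Let {g_n} be a sequence in SL(d, ℝ) and let k ∈ {1,…,d−1}. Suppose σ_k(g_n)/σ_{k+1}(g_n) → ∞, U_k(g_n) → V₀ in the Grassmannian Gr_k(ℝ^d), and U_{d−k}(g_n⁻¹) → W₀ in Gr_{d−k}(ℝ^d). Then for every V ∈ Gr_k(ℝ^d) transverse to W₀ (i.e. V ∩ W₀ = 0), g_n(V) → V₀. -/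
open scoped Topology Matrix

noncomputable section

/-- The orthogonal projection onto a subspace of Euclidean space, as an endomorphism.
Convergence of subspaces in the Grassmannian is encoded as convergence of these
projections. -/
def projOnto {d : ℕ} (V : Submodule ℝ (EuclideanSpace ℝ (Fin d))) :
    EuclideanSpace ℝ (Fin d) →L[ℝ] EuclideanSpace ℝ (Fin d) :=
  V.subtypeL.comp (V.orthogonalProjection)

/-- The span of the first `k` standard coordinates of `ℝ^d`. -/
def firstCoords (d k : ℕ) : Submodule ℝ (EuclideanSpace ℝ (Fin d)) where
  carrier := {x | ∀ i : Fin d, k ≤ (i : ℕ) → x i = 0}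
  add_mem' := by intro x y hx hy i hi; simp [hx i hi, hy i hi]
  zero_mem' := by intro i _; rfl
  smul_mem' := by intro c x hx i hi; simp [hx i hi]

/-- The span of the last `d - k` standard coordinates of `ℝ^d`. -/
def lastCoords (d k : ℕ) : Submodule ℝ (EuclideanSpace ℝ (Fin d)) where
  carrier := {x | ∀ i : Fin d, (i : ℕ) < k → x i = 0}
  add_mem' := by intro x y hx hy i hi; simp [hx i hi, hy i hi]
  zero_mem' := by intro i _; rfl
  smul_mem' := by intro c x hx i hi; simp [hx i hi]

/-!
Write `g_n = K_n D_n L_n`. Transversality gives `δ > 0` with `‖v - P_{W₀} v‖ ≥ δ ‖v‖` on `V`.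
Since `L_n` is an isometry carrying `W_n = L_nᵀ(span(e_{k+1},…,e_d))` onto the last coordinates and
`W_n → W₀`, for large `n` every vector of `L_n V` keeps a fraction `δ/2` of its norm in the first
`k` coordinates. The diagonal `D_n` stretches those by at least `σ_k` and the others by at most
`σ_{k+1}`, so every vector of `D_n L_n V` lies within relative distance
`ε_n = (σ_{k+1}/σ_k)(δ/2)⁻¹ → 0` of `span(e₁,…,e_k)`. Both are `k`-planes, so their projections
are `3ε_n`-close; applying the isometry `K_n` and using `U_k(g_n) → V₀` concludes.
-/

open Filter Submodule Module

section InnerProductSpace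

variable {E : Type*} [NormedAddCommGroup E] [InnerProductSpace ℝ E]

theorem Submodule.norm_sub_starProjection_le_norm_sub (U : Submodule ℝ E)
    [U.HasOrthogonalProjection] (y : E) {x : E} (hx : x ∈ U) :
    ‖y - U.starProjection y‖ ≤ ‖y - x‖ := by
  rw [starProjection_minimal]
  exact ciInf_le ⟨0, Set.forall_mem_range.2 fun _ => norm_nonneg _⟩ (⟨x, hx⟩ : U)

theorem exists_pos_mul_norm_le_norm_sub_starProjection {V W : Submodule ℝ E}
    [FiniteDimensional ℝ V] [W.HasOrthogonalProjection] (hVW : V ⊓ W = ⊥) :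
    ∃ δ > 0, ∀ v ∈ V, δ * ‖v‖ ≤ ‖v - W.starProjection v‖ := by
  let f : V →ₗ[ℝ] E := (ContinuousLinearMap.id ℝ E - W.starProjection).toLinearMap ∘ₗ V.subtype
  have hf : LinearMap.ker f = ⊥ := by
    refine LinearMap.ker_eq_bot'.2 fun v hv => Subtype.ext ?_
    have hvW : (v : E) ∈ W := by
      have hv' : (v : E) - W.starProjection v = 0 := hv
      rw [sub_eq_zero.1 hv']
      exact W.starProjection_apply_mem v
    have hvVW : (v : E) ∈ V ⊓ W := ⟨v.2, hvW⟩
    rwa [hVW, Submodule.mem_bot] at hvVW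
  obtain ⟨C, hC, hCf⟩ := f.exists_antilipschitzWith hf
  refine ⟨(C : ℝ)⁻¹, by positivity, fun v hv => ?_⟩
  rw [inv_mul_le_iff₀ (by positivity)]
  exact hCf.le_mul_norm (map_zero f) ⟨v, hv⟩

theorem norm_sub_starProjection_map_symm (Q : E ≃ₗᵢ[ℝ] E) (W : Submodule ℝ E)
    [W.HasOrthogonalProjection] (v : E) :
    ‖v - (W.map (Q.symm.toLinearEquiv : E →ₗ[ℝ] E)).starProjection v‖
      = ‖Q v - W.starProjection (Q v)‖ := by
  rw [starProjection_map_apply, Q.symm_symm, ← Q.norm_map, map_sub, Q.apply_symm_apply]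

theorem norm_starProjection_map_sub_starProjection_map (Q : E ≃ₗᵢ[ℝ] E) (S F : Submodule ℝ E)
    [S.HasOrthogonalProjection] [F.HasOrthogonalProjection] :
    ‖(S.map (Q.toLinearEquiv : E →ₗ[ℝ] E)).starProjection
        - (F.map (Q.toLinearEquiv : E →ₗ[ℝ] E)).starProjection‖
      = ‖S.starProjection - F.starProjection‖ := by
  have hconj : ∀ (U : Submodule ℝ E) [U.HasOrthogonalProjection],
      (U.map (Q.toLinearEquiv : E →ₗ[ℝ] E)).starProjection
        = (Q : E →L[ℝ] E) ∘L U.starProjection ∘L (Q.symm : E →L[ℝ] E) :=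
    fun U _ => ContinuousLinearMap.ext (starProjection_map_apply Q U)
  rw [hconj S, hconj F, ← ContinuousLinearMap.comp_sub, ← ContinuousLinearMap.sub_comp,
    ContinuousLinearMap.opNorm_linearIsometryEquiv_comp,
    ContinuousLinearMap.opNorm_comp_linearIsometryEquiv]

section Gap

variable {S F : Submodule ℝ E} {ε : ℝ}

theorem norm_one_sub_starProjection_mul_starProjection_le [S.HasOrthogonalProjection]
    [F.HasOrthogonalProjection] (hε : 0 ≤ ε)
    (h : ∀ u ∈ S, ‖u - F.starProjection u‖ ≤ ε * ‖u‖) :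
    ‖(1 - F.starProjection) * S.starProjection‖ ≤ ε := by
  refine ContinuousLinearMap.opNorm_le_bound _ hε fun x => ?_
  calc ‖((1 - F.starProjection) * S.starProjection) x‖
      = ‖S.starProjection x - F.starProjection (S.starProjection x)‖ := rfl
    _ ≤ ε * ‖S.starProjection x‖ := h _ (S.starProjection_apply_mem x)
    _ ≤ ε * ‖x‖ := by gcongr; exact S.norm_starProjection_apply_le x

theorem map_starProjection_eq_of_forall_norm_sub_le [FiniteDimensional ℝ F]
    (hdim : finrank ℝ F ≤ finrank ℝ S) (hε : ε < 1)
    (h : ∀ u ∈ S, ‖u - F.starProjection u‖ ≤ ε * ‖u‖) :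
    S.map (F.starProjection : E →ₗ[ℝ] E) = F := by
  let f : S →ₗ[ℝ] E := (F.starProjection : E →ₗ[ℝ] E) ∘ₗ S.subtype
  have hf : Function.Injective f := by
    rw [← LinearMap.ker_eq_bot, LinearMap.ker_eq_bot']
    intro u hu
    have hu' : F.starProjection u = 0 := hu
    have hle : ‖(u : E)‖ ≤ ε * ‖(u : E)‖ := by simpa [hu'] using h u u.2
    exact Subtype.ext (norm_le_zero_iff.1 (by nlinarith [norm_nonneg (u : E)]))
  refine eq_of_le_of_finrank_le ?_ ?_
  · rintro _ ⟨u, -, rfl⟩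
    exact F.starProjection_apply_mem u
  · rwa [← range_subtype S, ← LinearMap.range_comp, LinearMap.finrank_range_of_inj hf]

theorem norm_one_sub_starProjection_mul_starProjection_le_two_mul [S.HasOrthogonalProjection]
    [F.HasOrthogonalProjection] (hmap : S.map (F.starProjection : E →ₗ[ℝ] E) = F)
    (hε0 : 0 ≤ ε) (hε : ε ≤ 1 / 2) (h : ∀ u ∈ S, ‖u - F.starProjection u‖ ≤ ε * ‖u‖) :
    ‖(1 - S.starProjection) * F.starProjection‖ ≤ 2 * ε := by
  refine ContinuousLinearMap.opNorm_le_bound _ (by positivity) fun y => ?_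
  set x := F.starProjection y
  obtain ⟨u, hu, hux⟩ : x ∈ S.map (F.starProjection : E →ₗ[ℝ] E) :=
    by rw [hmap]; exact F.starProjection_apply_mem y
  have hclose : ‖u - x‖ ≤ ε * ‖u‖ := hux ▸ h u hu
  have hu_le : ‖u‖ ≤ 2 * ‖y‖ := by
    have := norm_le_norm_add_norm_sub' u x
    have := F.norm_starProjection_apply_le y
    nlinarith [norm_nonneg u]
  calc ‖((1 - S.starProjection) * F.starProjection) y‖ = ‖x - S.starProjection x‖ := rfl
    _ ≤ ‖x - u‖ := S.norm_sub_starProjection_le_norm_sub x hu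
    _ ≤ ε * (2 * ‖y‖) := by rw [norm_sub_rev]; exact hclose.trans (by gcongr)
    _ = 2 * ε * ‖y‖ := by ring

theorem norm_starProjection_sub_starProjection_le [CompleteSpace E] [FiniteDimensional ℝ S]
    [FiniteDimensional ℝ F] (hdim : finrank ℝ F ≤ finrank ℝ S) (hε0 : 0 ≤ ε) (hε : ε ≤ 1 / 2)
    (h : ∀ u ∈ S, ‖u - F.starProjection u‖ ≤ ε * ‖u‖) :
    ‖S.starProjection - F.starProjection‖ ≤ 3 * ε := by
  have hSF := norm_one_sub_starProjection_mul_starProjection_le hε0 h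
  have hFS := norm_one_sub_starProjection_mul_starProjection_le_two_mul
    (map_starProjection_eq_of_forall_norm_sub_le hdim (by linarith) h) hε0 hε h
  have hstar : star ((1 - F.starProjection) * S.starProjection)
      = S.starProjection * (1 - F.starProjection) := by
    simp only [star_mul, star_sub, star_one, (isSelfAdjoint_starProjection S).star_eq,
      (isSelfAdjoint_starProjection F).star_eq]
  have hSF' : ‖S.starProjection * (1 - F.starProjection)‖ ≤ ε := by
    rw [← hstar]
    exact (norm_star _).le.trans hSF
  calc ‖S.starProjection - F.starProjection‖
      = ‖S.starProjection * (1 - F.starProjection)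
          - (1 - S.starProjection) * F.starProjection‖ := by congr 1; noncomm_ring
    _ ≤ ‖S.starProjection * (1 - F.starProjection)‖
          + ‖(1 - S.starProjection) * F.starProjection‖ := norm_sub_le _ _
    _ ≤ ε + 2 * ε := add_le_add hSF' hFS
    _ = 3 * ε := by ring

end Gap

end InnerProductSpace

section Matrix

variable {n : Type*} [Fintype n] [DecidableEq n]

def toEuclideanIsometry (M : Matrix n n ℝ) (hM : M * Mᵀ = 1) :
    EuclideanSpace ℝ n ≃ₗᵢ[ℝ] EuclideanSpace ℝ n :=
  Unitary.linearIsometryEquiv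
    ⟨Matrix.toEuclideanCLM (𝕜 := ℝ) (n := n) M,
      Unitary.map_mem (Matrix.toEuclideanCLM (𝕜 := ℝ) (n := n))
        ((Matrix.mem_orthogonalGroup_iff n ℝ).2 hM)⟩

theorem toEuclideanIsometry_toLinearMap (M : Matrix n n ℝ) (hM : M * Mᵀ = 1) :
    ((toEuclideanIsometry M hM).toLinearEquiv : EuclideanSpace ℝ n →ₗ[ℝ] EuclideanSpace ℝ n)
      = Matrix.toEuclideanLin M :=
  rfl

theorem toEuclideanIsometry_symm_toLinearMap (M : Matrix n n ℝ) (hM : M * Mᵀ = 1) :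
    ((toEuclideanIsometry M hM).symm.toLinearEquiv :
        EuclideanSpace ℝ n →ₗ[ℝ] EuclideanSpace ℝ n)
      = Matrix.toEuclideanLin Mᵀ := by
  ext1 x
  change (toEuclideanIsometry M hM).symm x = _
  rw [LinearIsometryEquiv.symm_apply_eq]
  change x = Matrix.toEuclideanLin M (Matrix.toEuclideanLin Mᵀ x)
  simp [Matrix.toLpLin_apply, Matrix.mulVec_mulVec, hM]

theorem toEuclideanLin_diagonal_apply (a : n → ℝ) (x : EuclideanSpace ℝ n) (i : n) :
    Matrix.toEuclideanLin (Matrix.diagonal a) x i = a i * x i := by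
  simp [Matrix.toLpLin_apply, Matrix.mulVec_diagonal]

theorem toEuclideanLin_diagonal_injective {a : n → ℝ} (ha : ∀ i, a i ≠ 0) :
    Function.Injective (Matrix.toEuclideanLin (Matrix.diagonal a)) := by
  intro x y hxy
  ext i
  have hi := congrArg (· i) hxy
  simp only [toEuclideanLin_diagonal_apply] at hi
  exact mul_left_cancel₀ (ha i) hi

theorem norm_toEuclideanLin_diagonal_le {a : n → ℝ} {C : ℝ} (hC : 0 ≤ C)
    {x : EuclideanSpace ℝ n} (h : ∀ i, x i ≠ 0 → |a i| ≤ C) :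
    ‖Matrix.toEuclideanLin (Matrix.diagonal a) x‖ ≤ C * ‖x‖ := by
  rw [← pow_le_pow_iff_left₀ (norm_nonneg _) (by positivity) two_ne_zero, mul_pow,
    EuclideanSpace.norm_sq_eq, EuclideanSpace.norm_sq_eq, Finset.mul_sum]
  refine Finset.sum_le_sum fun i _ => ?_
  rw [toEuclideanLin_diagonal_apply, norm_mul, mul_pow, Real.norm_eq_abs (a i)]
  by_cases hx : x i = 0
  · simp [hx]
  · gcongr
    exact h i hx

theorem le_norm_toEuclideanLin_diagonal {a : n → ℝ} {m : ℝ} (hm : 0 ≤ m)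
    {x : EuclideanSpace ℝ n} (h : ∀ i, x i ≠ 0 → m ≤ |a i|) :
    m * ‖x‖ ≤ ‖Matrix.toEuclideanLin (Matrix.diagonal a) x‖ := by
  rw [← pow_le_pow_iff_left₀ (by positivity) (norm_nonneg _) two_ne_zero, mul_pow,
    EuclideanSpace.norm_sq_eq, EuclideanSpace.norm_sq_eq, Finset.mul_sum]
  refine Finset.sum_le_sum fun i _ => ?_
  rw [toEuclideanLin_diagonal_apply, norm_mul, mul_pow, Real.norm_eq_abs (a i)]
  by_cases hx : x i = 0
  · simp [hx]
  · gcongr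
    exact h i hx

end Matrix

section Coordinates

variable {d k : ℕ}

theorem projOnto_eq_starProjection (V : Submodule ℝ (EuclideanSpace ℝ (Fin d))) :
    projOnto V = V.starProjection :=
  rfl

def firstCoordsEquiv (hkd : k ≤ d) : firstCoords d k ≃ₗ[ℝ] (Fin k → ℝ) where
  toFun x j := x.1 (Fin.castLE hkd j)
  invFun y := ⟨WithLp.toLp 2 fun i => if h : (i : ℕ) < k then y ⟨i, h⟩ else 0,
    fun _ hi => dif_neg (not_lt.2 hi)⟩
  map_add' _ _ := rfl
  map_smul' _ _ := rfl
  left_inv x := by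
    ext i
    by_cases h : (i : ℕ) < k
    · simp [h]
    · simp [h, x.2 i (not_lt.1 h)]
  right_inv y := by
    ext j
    simp

theorem finrank_firstCoords (hkd : k ≤ d) : finrank ℝ (firstCoords d k) = k := by
  rw [(firstCoordsEquiv hkd).finrank_eq, Module.finrank_fin_fun]

theorem orthogonal_firstCoords : (firstCoords d k)ᗮ = lastCoords d k := by
  ext x
  rw [mem_orthogonal']
  constructor
  · intro hx i hi
    simpa [EuclideanSpace.inner_single_right] using
      hx (EuclideanSpace.single i 1) fun j hj => by simp [Fin.ext_iff]; omega
  · intro hx y hy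
    rw [PiLp.inner_apply]
    refine Finset.sum_eq_zero fun i _ => ?_
    by_cases h : (i : ℕ) < k
    · simp [hx i h]
    · simp [hy i (not_lt.1 h)]

theorem starProjection_firstCoords_apply (x : EuclideanSpace ℝ (Fin d)) (i : Fin d) :
    (firstCoords d k).starProjection x i = if (i : ℕ) < k then x i else 0 := by
  rw [eq_starProjection_of_mem_orthogonal (v := WithLp.toLp 2 fun i : Fin d =>
    if (i : ℕ) < k then x i else 0)]
  · intro i hi
    simp [not_lt.2 hi]
  · rw [orthogonal_firstCoords]
    intro i hi
    simp [hi]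

theorem norm_sub_starProjection_lastCoords (x : EuclideanSpace ℝ (Fin d)) :
    ‖x - (lastCoords d k).starProjection x‖ = ‖(firstCoords d k).starProjection x‖ := by
  rw [← orthogonal_firstCoords, starProjection_orthogonal']
  simp

theorem toEuclideanLin_diagonal_starProjection_firstCoords (a : Fin d → ℝ)
    (x : EuclideanSpace ℝ (Fin d)) :
    Matrix.toEuclideanLin (Matrix.diagonal a) ((firstCoords d k).starProjection x)
      = (firstCoords d k).starProjection (Matrix.toEuclideanLin (Matrix.diagonal a) x) := by
  ext i
  simp only [toEuclideanLin_diagonal_apply, starProjection_firstCoords_apply]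
  split_ifs <;> simp

end Coordinates

section SingularValues

variable {d k : ℕ}

theorem norm_sub_starProjection_firstCoords_diagonal_le {a : Fin d → ℝ} {m C c : ℝ}
    (hm : 0 < m) (hC : 0 ≤ C) (hc : 0 < c) (hfirst : ∀ i : Fin d, (i : ℕ) < k → m ≤ |a i|)
    (hlast : ∀ i : Fin d, k ≤ (i : ℕ) → |a i| ≤ C) {u : EuclideanSpace ℝ (Fin d)}
    (hu : c * ‖u‖ ≤ ‖(firstCoords d k).starProjection u‖) :
    ‖Matrix.toEuclideanLin (Matrix.diagonal a) u
        - (firstCoords d k).starProjection (Matrix.toEuclideanLin (Matrix.diagonal a) u)‖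
      ≤ C / m * c⁻¹ * ‖Matrix.toEuclideanLin (Matrix.diagonal a) u‖ := by
  set D := Matrix.toEuclideanLin (Matrix.diagonal a)
  set P := (firstCoords d k).starProjection
  have hupper : ‖D u - P (D u)‖ ≤ C * ‖u‖ :=
    calc ‖D u - P (D u)‖ = ‖D (u - P u)‖ := by
          rw [map_sub, toEuclideanLin_diagonal_starProjection_firstCoords]
      _ ≤ C * ‖u - P u‖ := by
          refine norm_toEuclideanLin_diagonal_le hC fun i hi => hlast i ?_
          by_contra h
          simp [P, starProjection_firstCoords_apply, not_le.1 h] at hi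
      _ ≤ C * ‖u‖ := by
          gcongr
          simpa using (firstCoords d k).norm_sub_starProjection_le_norm_sub u (zero_mem _)
  have hlower : m * c * ‖u‖ ≤ ‖D u‖ :=
    calc m * c * ‖u‖ ≤ m * ‖P u‖ := by
          rw [mul_assoc]
          exact mul_le_mul_of_nonneg_left hu hm.le
      _ ≤ ‖D (P u)‖ := by
          refine le_norm_toEuclideanLin_diagonal hm.le fun i hi => hfirst i ?_
          by_contra h
          simp [P, starProjection_firstCoords_apply, h] at hi
      _ = ‖P (D u)‖ := by rw [toEuclideanLin_diagonal_starProjection_firstCoords]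
      _ ≤ ‖D u‖ := norm_starProjection_apply_le _ _
  calc ‖D u - P (D u)‖ ≤ C * ‖u‖ := hupper
    _ = C / m * c⁻¹ * (m * c * ‖u‖) := by field_simp
    _ ≤ C / m * c⁻¹ * ‖D u‖ := by gcongr

theorem mul_norm_le_norm_starProjection_firstCoords {L : Matrix (Fin d) (Fin d) ℝ}
    (hL : L * Lᵀ = 1) {V W : Submodule ℝ (EuclideanSpace ℝ (Fin d))} {δ : ℝ}
    (hVW : ∀ v ∈ V, δ * ‖v‖ ≤ ‖v - W.starProjection v‖) {u : EuclideanSpace ℝ (Fin d)}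
    (hu : u ∈ V.map (Matrix.toEuclideanLin L)) :
    (δ - ‖((lastCoords d k).map (Matrix.toEuclideanLin Lᵀ)).starProjection
        - W.starProjection‖) * ‖u‖
      ≤ ‖(firstCoords d k).starProjection u‖ := by
  obtain ⟨v, hv, rfl⟩ := hu
  set W' := (lastCoords d k).map (Matrix.toEuclideanLin Lᵀ) with hW'
  have hQ : Matrix.toEuclideanLin L v = toEuclideanIsometry L hL v := rfl
  have hdist : ‖v - W'.starProjection v‖
      = ‖(firstCoords d k).starProjection (toEuclideanIsometry L hL v)‖ := by
    simp only [hW', ← toEuclideanIsometry_symm_toLinearMap L hL]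
    rw [norm_sub_starProjection_map_symm, norm_sub_starProjection_lastCoords]
  have htri : ‖v - W.starProjection v‖
      ≤ ‖v - W'.starProjection v‖ + ‖W'.starProjection - W.starProjection‖ * ‖v‖ :=
    calc ‖v - W.starProjection v‖
        = ‖(v - W'.starProjection v) + (W'.starProjection - W.starProjection) v‖ := by
          rw [sub_apply, sub_add_sub_cancel]
      _ ≤ _ := (norm_add_le _ _).trans (by gcongr; exact ContinuousLinearMap.le_opNorm _ _)
  rw [hQ, LinearIsometryEquiv.norm_map, ← hdist, sub_mul]
  linarith [hVW v hv]

theorem norm_starProjection_map_svd_sub_le (hkd : k < d) {K L : Matrix (Fin d) (Fin d) ℝ}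
    {a : Fin d → ℝ} (hK : K * Kᵀ = 1) (hL : L * Lᵀ = 1) (ha : Antitone a) (hpos : ∀ i, 0 < a i)
    {V W : Submodule ℝ (EuclideanSpace ℝ (Fin d))} (hV : finrank ℝ V = k) {δ : ℝ} (hδ : 0 < δ)
    (hVW : ∀ v ∈ V, δ * ‖v‖ ≤ ‖v - W.starProjection v‖)
    (hW : ‖((lastCoords d k).map (Matrix.toEuclideanLin Lᵀ)).starProjection
        - W.starProjection‖ ≤ δ / 2)
    (hgap : a ⟨k, hkd⟩ / a ⟨k - 1, (k.sub_le 1).trans_lt hkd⟩ * (δ / 2)⁻¹ ≤ 1 / 2) :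
    ‖(V.map (Matrix.toEuclideanLin (K * Matrix.diagonal a * L))).starProjection
        - ((firstCoords d k).map (Matrix.toEuclideanLin K)).starProjection‖
      ≤ 3 * (a ⟨k, hkd⟩ / a ⟨k - 1, (k.sub_le 1).trans_lt hkd⟩ * (δ / 2)⁻¹) := by
  set ε := a ⟨k, hkd⟩ / a ⟨k - 1, (k.sub_le 1).trans_lt hkd⟩ * (δ / 2)⁻¹
  set T := (V.map (Matrix.toEuclideanLin L)).map (Matrix.toEuclideanLin (Matrix.diagonal a))
  have hT : V.map (Matrix.toEuclideanLin (K * Matrix.diagonal a * L))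
      = T.map (Matrix.toEuclideanLin K) := by
    simp only [T, Matrix.toLpLin_mul_same, map_comp]
  have hdim : finrank ℝ (firstCoords d k) ≤ finrank ℝ T := by
    rw [finrank_firstCoords hkd.le, ← (equivMapOfInjective _
      (toEuclideanLin_diagonal_injective fun i => (hpos i).ne') _).finrank_eq,
      ← toEuclideanIsometry_toLinearMap L hL, LinearEquiv.finrank_map_eq, hV]
  have hclose : ∀ w ∈ T, ‖w - (firstCoords d k).starProjection w‖ ≤ ε * ‖w‖ := by
    rintro _ ⟨u, hu, rfl⟩
    refine norm_sub_starProjection_firstCoords_diagonal_le (hpos _) (hpos _).le (half_pos hδ)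
      (fun i hi => ?_) (fun i hi => ?_) ?_
    · rw [abs_of_pos (hpos i)]
      exact ha (Fin.le_def.2 (by simp; omega))
    · rw [abs_of_pos (hpos i)]
      exact ha (Fin.le_def.2 hi)
    · refine le_trans ?_ (mul_norm_le_norm_starProjection_firstCoords hL hVW hu)
      gcongr
      linarith
  have hε : 0 ≤ ε := mul_nonneg (div_nonneg (hpos _).le (hpos _).le) (by positivity)
  simp only [hT, ← toEuclideanIsometry_toLinearMap K hK]
  rw [norm_starProjection_map_sub_starProjection_map]
  exact norm_starProjection_sub_starProjection_le hdim hε hgap hclose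

end SingularValues

/-- If `{g_n} ⊂ SL(d,ℝ)` has singular value decompositions `g_n = K_n A_n L_n` with
`σ_k(g_n)/σ_{k+1}(g_n) → ∞`, `U_k(g_n) = K_n(span(e₁,…,e_k)) → V₀` and
`U_{d−k}(g_n⁻¹) = L_nᵀ(span(e_{k+1},…,e_d)) → W₀` in the Grassmannians, then
`g_n(V) → V₀` for every `k`-plane `V` transverse to `W₀`. -/
theorem grassmannian_convergence
    (d k : ℕ) (hkd : k < d)
    (g : ℕ → Matrix.SpecialLinearGroup (Fin d) ℝ)
    (K L : ℕ → Matrix (Fin d) (Fin d) ℝ) (A : ℕ → Fin d → ℝ)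
    (hK : ∀ n, K n * (K n)ᵀ = 1) (hL : ∀ n, L n * (L n)ᵀ = 1)
    (hAmono : ∀ n, ∀ i j : Fin d, i ≤ j → A n j ≤ A n i)
    (hApos : ∀ n, ∀ i : Fin d, 0 < A n i)
    (hSVD : ∀ n, (g n : Matrix (Fin d) (Fin d) ℝ) = K n * Matrix.diagonal (A n) * L n)
    (V₀ W₀ : Submodule ℝ (EuclideanSpace ℝ (Fin d)))
    (hgap : Filter.Tendsto
      (fun n => A n ⟨k - 1, by omega⟩ / A n ⟨k, hkd⟩) Filter.atTop Filter.atTop)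
    (hU : Filter.Tendsto
      (fun n => projOnto ((firstCoords d k).map (Matrix.toEuclideanLin (K n))))
      Filter.atTop (𝓝 (projOnto V₀)))
    (hW : Filter.Tendsto
      (fun n => projOnto ((lastCoords d k).map (Matrix.toEuclideanLin (L n)ᵀ)))
      Filter.atTop (𝓝 (projOnto W₀))) :
    ∀ V : Submodule ℝ (EuclideanSpace ℝ (Fin d)),
      Module.finrank ℝ V = k → V ⊓ W₀ = ⊥ →
      Filter.Tendsto
        (fun n => projOnto (V.map (Matrix.toEuclideanLin (g n : Matrix (Fin d) (Fin d) ℝ))))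
        Filter.atTop (𝓝 (projOnto V₀)) := by
  intro V hVk hVW₀
  simp only [projOnto_eq_starProjection] at hU hW ⊢
  obtain ⟨δ, hδ, hVW⟩ := exists_pos_mul_norm_le_norm_sub_starProjection hVW₀
  have hratio : Tendsto (fun n => A n ⟨k, hkd⟩ / A n ⟨k - 1, by omega⟩ * (δ / 2)⁻¹)
      atTop (𝓝 0) := by
    simpa only [Pi.inv_apply, inv_div, zero_mul] using
      hgap.inv_tendsto_atTop.mul_const (δ / 2)⁻¹
  have hWn := (tendsto_iff_norm_sub_tendsto_zero.1 hW).eventually_le_const (half_pos hδ)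
  refine tendsto_of_tendsto_of_dist hU (squeeze_zero' (.of_forall fun n => dist_nonneg)
    ?_ (by simpa only [mul_zero] using hratio.const_mul 3))
  filter_upwards [hWn, hratio.eventually_le_const (one_half_pos (α := ℝ))] with n hWn hn
  rw [dist_comm, dist_eq_norm, hSVD n]
  exact norm_starProjection_map_svd_sub_le hkd (hK n) (hL n) (hAmono n) (hApos n) hVk hδ hVW hWn hn

end
end

section
/- Let g ∈ SL(d, ℝ) be weakly unipotent, and suppose there are complete flags F₁, F₂ in ℝ^d such that g fixes F₁ and the quadruple of flags (F₁, g⁻¹(F₂), F₂, g(F₂)) is positive. Then g = ±u for a unipotent u ∈ SL(d, ℝ) with a single Jordan block; equivalently, F₁ is the unique complete flag fixed by g. -/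
/-!
Choose a basis `B` adapted to the positive quadruple, so that `F₁` is its standard flag and
`F₄ = g F₂` the opposite one, and write `M`, `U₂`, `U₃` for the matrices of `g`, `u₂`, `u₃` in
`B`. As `g` fixes `F₁`, `M` is upper triangular; as `g u₃` and `u₃⁻¹ g u₃ u₂` fix `F₄`, the
matrices `L = M U₃` and `K = U₃⁻¹ L U₂` are also lower triangular, hence diagonal. The entries of
`U₂`, `U₃` on and above the diagonal are positive, so comparing entries of `L U₂ = U₃ K` shows
that all diagonal entries of `M` have the same sign; they are eigenvalues of `g`, hence `±1` by
weak unipotence, so they all equal some `ε = ±1`. The vanishing superdiagonal of `L` then forces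
the superdiagonal of `M` to be nonzero, so `ε g - 1` is nilpotent with a single Jordan block.
For such a nilpotent `N` the kernels of the powers `N ^ i` strictly increase, so `ker (N ^ i)`
is the only `N`-invariant subspace of dimension `i`, and a `g`-invariant complete flag is unique.
-/

noncomputable section

/-- A complete flag in `ℝ^d`: a nested family of subspaces with `dim F i = i` for
`i ≤ d`. -/
def IsCompleteFlag (d : ℕ) (F : ℕ → Submodule ℝ (Fin d → ℝ)) : Prop :=
  Monotone F ∧ ∀ i, i ≤ d → Module.finrank ℝ (F i) = i

/-- The image flag `g(F)` of a flag `F` under a matrix `g`. -/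
def mapFlag {d : ℕ} (g : Matrix (Fin d) (Fin d) ℝ) (F : ℕ → Submodule ℝ (Fin d → ℝ)) :
    ℕ → Submodule ℝ (Fin d → ℝ) :=
  fun i => (F i).map (Matrix.toLin' g)

/-- The matrix of (the linear map induced by) `w` with respect to the ordered basis `B`. -/
def matrixWrt {d : ℕ} (B : Module.Basis (Fin d) ℝ (Fin d → ℝ)) (w : Matrix (Fin d) (Fin d) ℝ) :
    Matrix (Fin d) (Fin d) ℝ :=
  LinearMap.toMatrix B B (Matrix.toLin' w)

/-- Membership in `U_{>0}(B)`: `w` is unipotent and its matrix with respect to the ordered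
basis `B` is totally positive upper triangular. -/
def MemUPos {d : ℕ} (B : Module.Basis (Fin d) ℝ (Fin d → ℝ)) (w : Matrix (Fin d) (Fin d) ℝ) : Prop :=
  IsNilpotent (w - 1) ∧ IsTotallyPositiveUpper (matrixWrt B w)

/-- Positivity of a quadruple of flags `(F₁, F₂, F₃, F₄)` (Fock–Goncharov). -/
def PositiveQuadruple (d : ℕ) (F₁ F₂ F₃ F₄ : ℕ → Submodule ℝ (Fin d → ℝ)) : Prop :=
  ∃ (B : Module.Basis (Fin d) ℝ (Fin d → ℝ)) (u₂ u₃ : Matrix (Fin d) (Fin d) ℝ),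
    (∀ i : Fin d, B i ∈ F₁ ((i : ℕ) + 1) ⊓ F₄ (d - (i : ℕ))) ∧
    MemUPos B u₂ ∧ MemUPos B u₃ ∧
    mapFlag (u₃ * u₂) F₄ = F₂ ∧ mapFlag u₃ F₄ = F₃

/-- `g` is weakly unipotent: its multiplicative Jordan–Chevalley decomposition `g = s·u`
has elliptic semisimple part `s` (diagonalizable over `ℂ` with all eigenvalues of modulus
one) and unipotent part `u`. -/
def IsWeaklyUnipotent {d : ℕ} (g : Matrix (Fin d) (Fin d) ℝ) : Prop :=
  ∃ s u : Matrix (Fin d) (Fin d) ℝ, g = s * u ∧ s * u = u * s ∧ IsNilpotent (u - 1) ∧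
    ∃ (P : Matrix (Fin d) (Fin d) ℂ) (D : Fin d → ℂ),
      IsUnit P.det ∧ s.map (fun x : ℝ => (x : ℂ)) = P * Matrix.diagonal D * P⁻¹ ∧
      ∀ i, ‖D i‖ = 1

namespace Module.End

open LinearMap

variable {K V : Type*} [Field K] [AddCommGroup V] [Module K V] {f : Module.End K V}

theorem ker_pow_lt_ker_pow_succ (hf : f ^ finrank K V = 0) (hf' : f ^ (finrank K V - 1) ≠ 0)
    {k : ℕ} (hk : k < finrank K V) : ker (f ^ k) < ker (f ^ (k + 1)) := by
  refine lt_of_le_of_ne (fun x hx => ?_) fun h => hf' ?_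
  · rw [mem_ker, pow_succ', mul_apply, mem_ker.1 hx, map_zero]
  · -- once two consecutive kernels agree they stay constant, so `ker (f ^ (n - 1)) = ker (f ^ n)`
    have hconst := ker_pow_constant h
    rw [← ker_eq_top, ← Nat.add_sub_of_le (Nat.le_sub_one_of_lt hk), ← hconst,
      hconst (finrank K V - k), Nat.add_sub_of_le hk.le, hf, ker_zero]

theorem add_le_finrank_ker_pow [FiniteDimensional K V] (hf : f ^ finrank K V = 0)
    (hf' : f ^ (finrank K V - 1) ≠ 0) (k : ℕ) {j : ℕ} (hj : k + j ≤ finrank K V) :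
    finrank K (ker (f ^ k)) + j ≤ finrank K (ker (f ^ (k + j))) := by
  induction j with
  | zero => rfl
  | succ j ih =>
    have hlt := Submodule.finrank_lt_finrank_of_lt
      (ker_pow_lt_ker_pow_succ hf hf' (k := k + j) (by omega))
    have hle := ih (by omega)
    rw [← add_assoc k j 1]
    omega

theorem finrank_ker_pow [FiniteDimensional K V] (hf : f ^ finrank K V = 0)
    (hf' : f ^ (finrank K V - 1) ≠ 0) {k : ℕ} (hk : k ≤ finrank K V) :
    finrank K (ker (f ^ k)) = k := by
  have lower := add_le_finrank_ker_pow hf hf' 0 (j := k) (by omega)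
  have upper := add_le_finrank_ker_pow hf hf' k (j := finrank K V - k) (by omega)
  have top := Submodule.finrank_le (ker (f ^ (k + (finrank K V - k))))
  rw [zero_add] at lower
  omega

theorem le_ker_pow_finrank_of_invariant [FiniteDimensional K V] (hf : IsNilpotent f)
    {W : Submodule K V} (hW : ∀ x ∈ W, f x ∈ W) : W ≤ ker (f ^ finrank K W) := by
  intro x hx
  have hρ : (f.restrict hW) ^ finrank K W = 0 := by
    simpa [(isNilpotent.restrict hW hf).charpoly_eq_X_pow_finrank] using
      (f.restrict hW).aeval_self_charpoly
  rw [pow_restrict] at hρ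
  simpa using congrArg Subtype.val (LinearMap.congr_fun hρ ⟨x, hx⟩)

theorem eq_ker_pow_finrank_of_invariant [FiniteDimensional K V] (hf : f ^ finrank K V = 0)
    (hf' : f ^ (finrank K V - 1) ≠ 0) {W : Submodule K V} (hW : ∀ x ∈ W, f x ∈ W) :
    W = ker (f ^ finrank K W) :=
  Submodule.eq_of_le_of_finrank_eq (le_ker_pow_finrank_of_invariant ⟨_, hf⟩ hW)
    (finrank_ker_pow hf hf' (Submodule.finrank_le W)).symm

end Module.End

theorem spectrum_mul_subset_of_isNilpotent_sub_one {R A : Type*} [CommSemiring R] [Ring A]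
    [Algebra R A] {s u : A} (hsu : Commute s u) (hu : IsNilpotent (u - 1)) :
    spectrum R (s * u) ⊆ spectrum R s := by
  intro μ hμ
  rw [spectrum.mem_iff] at hμ ⊢
  refine fun hunit => hμ ?_
  have hsu' : Commute s (u - 1) := hsu.sub_right (Commute.one_right s)
  have hnil : IsNilpotent (-(s * (u - 1))) := (hsu'.isNilpotent_mul_left hu).neg
  have hcomm : Commute (-(s * (u - 1))) (algebraMap R A μ - s) :=
    ((Algebra.commute_algebraMap_right μ _).sub_right
      ((Commute.refl s).mul_left hsu'.symm)).neg_left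
  simpa [mul_sub, sub_add] using hnil.isUnit_add_left_of_commute hunit hcomm

theorem Module.Basis.eq_span_image_of_finrank_eq {ι K V : Type*} [Field K] [AddCommGroup V]
    [Module K V] [FiniteDimensional K V] (B : Module.Basis ι K V) {W : Submodule K V}
    {s : Finset ι} (hs : ∀ i ∈ s, B i ∈ W) (hW : Module.finrank K W = s.card) :
    W = Submodule.span K (B '' s) := by
  have hli : LinearIndependent K (B ∘ ((↑) : ↥(s : Set ι) → ι)) :=
    B.linearIndependent.comp _ Subtype.val_injective
  refine (Submodule.eq_of_le_of_finrank_eq ?_ ?_).symm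
  · exact Submodule.span_le.2 (Set.image_subset_iff.2 hs)
  · rw [hW, ← Subtype.range_coe (s := (s : Set ι)), ← Set.range_comp, finrank_span_eq_card hli]
    simp

namespace Matrix

section Triangular

variable {n R : Type*}

theorem IsUpperTriangular.isDiag_of_isLowerTriangular [LinearOrder n] [Zero R]
    {A : Matrix n n R} (hU : A.IsUpperTriangular) (hL : A.IsLowerTriangular) : A.IsDiag :=
  fun i j hij => (lt_or_gt_of_ne hij).elim
    (fun h => hL (show OrderDual.toDual j < OrderDual.toDual i from h)) fun h => hU h

theorem IsUpperTriangular.mul_apply_self [LinearOrder n] [Fintype n]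
    [NonUnitalNonAssocSemiring R] {A C : Matrix n n R} (hA : A.IsUpperTriangular)
    (hC : C.IsUpperTriangular) (i : n) : (A * C) i i = A i i * C i i := by
  refine Fintype.sum_eq_single i fun k hk => ?_
  show A i k * C k i = 0
  rcases lt_or_gt_of_ne hk with h | h
  · rw [hA h, zero_mul]
  · rw [hC h, mul_zero]

theorem IsUpperTriangular.diag_mem_spectrum [LinearOrder n] [Fintype n] [DecidableEq n]
    [Field R] {A : Matrix n n R} (hA : A.IsUpperTriangular) (i : n) : A i i ∈ spectrum R A := by
  rw [mem_spectrum_iff_isRoot_charpoly, charpoly_of_isUpperTriangular A hA, Polynomial.IsRoot,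
    Polynomial.eval_prod]
  exact Finset.prod_eq_zero (Finset.mem_univ i) (by simp)

theorem IsUpperTriangular.inv [LinearOrder n] [Fintype n] [DecidableEq n] [CommRing R]
    {A : Matrix n n R} (hA : A.IsUpperTriangular) : A⁻¹.IsUpperTriangular := by
  by_cases h : IsUnit A.det
  · have := A.invertibleOfIsUnitDet h
    exact blockTriangular_inv_of_blockTriangular hA
  · rw [nonsing_inv_apply_not_isUnit _ h]
    exact blockTriangular_zero

theorem IsDiag.mul_apply_left [Fintype n] [DecidableEq n] [NonUnitalNonAssocSemiring R]
    {L : Matrix n n R} (hL : L.IsDiag) (C : Matrix n n R) (i j : n) :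
    (L * C) i j = L i i * C i j := by
  conv_lhs => rw [← hL.diagonal_diag]
  exact diagonal_mul _ _ _ _

theorem IsDiag.mul_apply_right [Fintype n] [DecidableEq n] [NonUnitalNonAssocSemiring R]
    {K : Matrix n n R} (hK : K.IsDiag) (C : Matrix n n R) (i j : n) :
    (C * K) i j = C i j * K j j := by
  conv_lhs => rw [← hK.diagonal_diag]
  exact mul_diagonal _ _ _ _

theorem IsDiag.exists_pos_mul_of_mul_eq_mul [LinearOrder n] [Fintype n] [DecidableEq n]
    [Field R] [LinearOrder R] [IsStrictOrderedRing R] {L K U V : Matrix n n R}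
    (hL : L.IsDiag) (hK : K.IsDiag) (hU : ∀ i j, i ≤ j → 0 < U i j)
    (hV : ∀ i j, i ≤ j → 0 < V i j) (h : L * U = V * K) {i j : n} (hij : i ≤ j) :
    ∃ c, 0 < c ∧ L i i = c * L j j := by
  have entry : ∀ i j, L i i * U i j = V i j * K j j := fun i j => by
    rw [← hL.mul_apply_left, ← hK.mul_apply_right, h]
  have hUij := hU i j hij
  have hUjj := hU j j le_rfl
  have hVjj := hV j j le_rfl
  refine ⟨V i j / U i j * (U j j / V j j), by have := hV i j hij; positivity, ?_⟩
  have hKjj : K j j = U j j / V j j * L j j := by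
    field_simp
    linarith [entry j j]
  rw [mul_assoc, ← hKjj]
  field_simp
  linarith [entry i j]

variable {d : ℕ}

theorem IsUpperTriangular.mul_apply_of_eq_add_one [NonUnitalNonAssocSemiring R]
    {A C : Matrix (Fin d) (Fin d) R} (hA : A.IsUpperTriangular) (hC : C.IsUpperTriangular)
    {i j : Fin d} (hij : (j : ℕ) = i + 1) : (A * C) i j = A i i * C i j + A i j * C j j := by
  have hne : i ≠ j := fun h => by rw [h] at hij; omega
  refine Fintype.sum_eq_add i j hne fun k ⟨hki, hkj⟩ => ?_
  show A i k * C k j = 0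
  rcases lt_or_gt_of_ne hki with h | h
  · rw [hA h, zero_mul]
  · have hjk : j < k := by
      have : (k : ℕ) ≠ j := fun h' => hkj (Fin.ext h')
      rw [Fin.lt_def] at h ⊢
      omega
    rw [hC hjk, mul_zero]

theorem IsUpperTriangular.apply_ne_zero_of_mul_apply_eq_zero [NonUnitalNonAssocSemiring R]
    [NoZeroDivisors R] {A C : Matrix (Fin d) (Fin d) R} (hA : A.IsUpperTriangular)
    (hC : C.IsUpperTriangular) {i j : Fin d} (hij : (j : ℕ) = i + 1) (hAC : (A * C) i j = 0)
    (hAi : A i i ≠ 0) (hCij : C i j ≠ 0) : A i j ≠ 0 := fun h => by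
  rw [hA.mul_apply_of_eq_add_one hC hij, h, zero_mul, add_zero] at hAC
  exact mul_ne_zero hAi hCij hAC

end Triangular

section StrictlyUpper

variable {d : ℕ} {R : Type*} [Semiring R] {N : Matrix (Fin d) (Fin d) R}

theorem pow_apply_eq_zero_of_lt_add (hN : ∀ i j, j ≤ i → N i j = 0) (k : ℕ) {i j : Fin d}
    (hij : (j : ℕ) < i + k) : (N ^ k) i j = 0 := by
  induction k generalizing i with
  | zero => exact one_apply_ne fun h => by subst h; omega
  | succ k ih =>
    rw [pow_succ', mul_apply]
    refine Finset.sum_eq_zero fun m _ => ?_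
    by_cases hm : m ≤ i
    · rw [hN i m hm, zero_mul]
    · rw [ih (by rw [not_le, Fin.lt_def] at hm; omega), mul_zero]

theorem pow_eq_zero_of_forall_le (hN : ∀ i j, j ≤ i → N i j = 0) : N ^ d = 0 := by
  ext i j
  exact pow_apply_eq_zero_of_lt_add hN d (by omega)

theorem pow_apply_ne_zero_of_eq_add [NoZeroDivisors R] [Nontrivial R]
    (hN : ∀ i j, j ≤ i → N i j = 0) (hsup : ∀ i j : Fin d, (j : ℕ) = i + 1 → N i j ≠ 0)
    (k : ℕ) {i j : Fin d} (hij : (j : ℕ) = i + k) : (N ^ k) i j ≠ 0 := by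
  induction k generalizing i with
  | zero => rw [pow_zero, Fin.ext (hij.trans (add_zero _)).symm, one_apply_eq]; exact one_ne_zero
  | succ k ih =>
    let c : Fin d := ⟨i + 1, by omega⟩
    rw [pow_succ', mul_apply, Fintype.sum_eq_single c]
    · exact mul_ne_zero (hsup i c rfl) (ih (by simp only [c]; omega))
    · intro m hm
      by_cases him : m ≤ i
      · rw [hN i m him, zero_mul]
      · have : (m : ℕ) ≠ i + 1 := fun h => hm (Fin.ext h)
        rw [pow_apply_eq_zero_of_lt_add hN k (by rw [not_le, Fin.lt_def] at him; omega),
          mul_zero]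

theorem pow_pred_ne_zero [NoZeroDivisors R] [Nontrivial R] (hd : 1 ≤ d)
    (hN : ∀ i j, j ≤ i → N i j = 0) (hsup : ∀ i j : Fin d, (j : ℕ) = i + 1 → N i j ≠ 0) :
    N ^ (d - 1) ≠ 0 := fun h =>
  pow_apply_ne_zero_of_eq_add hN hsup (d - 1) (i := ⟨0, hd⟩) (j := ⟨d - 1, by omega⟩)
    (by simp) (by rw [h, zero_apply])

end StrictlyUpper

section SignOfDiagonal

variable {d : ℕ} {M U₂ U₃ K : Matrix (Fin d) (Fin d) ℝ}

theorem IsUpperTriangular.apply_self_eq_of_isDiag (hM : M.IsUpperTriangular)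
    (hMdiag : ∀ i, |M i i| = 1) (hU₂ : ∀ i j, i ≤ j → 0 < U₂ i j)
    (hU₃ : ∀ i j, i ≤ j → 0 < U₃ i j) (hU₃' : U₃.IsUpperTriangular) (hL : (M * U₃).IsDiag)
    (hK : K.IsDiag) (h : M * U₃ * U₂ = U₃ * K) (i j : Fin d) : M i i = M j j := by
  wlog hij : i ≤ j
  · exact (this hM hMdiag hU₂ hU₃ hU₃' hL hK h j i (le_of_not_ge hij)).symm
  obtain ⟨c, hc, hLc⟩ := hL.exists_pos_mul_of_mul_eq_mul hK hU₂ hU₃ h hij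
  rw [hM.mul_apply_self hU₃', hM.mul_apply_self hU₃'] at hLc
  have hjj : M j j * M j j = 1 := by rw [← abs_mul_abs_self, hMdiag, one_mul]
  have hprod : M i i * M j j * U₃ i i = c * U₃ j j := by
    linear_combination M j j * hLc + c * U₃ j j * hjj
  have hprod_pos : 0 < M i i * M j j :=
    pos_of_mul_pos_left (hprod ▸ mul_pos hc (hU₃ j j le_rfl)) (hU₃ i i le_rfl).le
  have hone : M i i * M j j = 1 := by
    rw [← abs_of_pos hprod_pos, abs_mul, hMdiag, hMdiag, one_mul]
  linear_combination M j j * hone - M i i * hjj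

theorem exists_sign_smul_sub_one_pow_eq_zero (hd : 1 ≤ d) (hM : M.IsUpperTriangular)
    (hMdiag : ∀ i, |M i i| = 1) (hU₂ : ∀ i j, i ≤ j → 0 < U₂ i j)
    (hU₃ : ∀ i j, i ≤ j → 0 < U₃ i j) (hU₃' : U₃.IsUpperTriangular) (hL : (M * U₃).IsDiag)
    (hK : K.IsDiag) (h : M * U₃ * U₂ = U₃ * K) :
    ∃ ε : ℝ, (ε = 1 ∨ ε = -1) ∧ (ε • M - 1) ^ d = 0 ∧ (ε • M - 1) ^ (d - 1) ≠ 0 := by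
  set ε := M ⟨0, hd⟩ ⟨0, hd⟩
  have hdiag_eq : ∀ i, M i i = ε := fun i =>
    hM.apply_self_eq_of_isDiag hMdiag hU₂ hU₃ hU₃' hL hK h i _
  have hεε : ε * ε = 1 := by rw [← abs_mul_abs_self, hMdiag, one_mul]
  have hε0 : ε ≠ 0 := left_ne_zero_of_mul_eq_one hεε
  have hN : ∀ i j, j ≤ i → (ε • M - 1) i j = 0 := by
    intro i j hji
    rcases hji.eq_or_lt with rfl | hlt
    · simp [hdiag_eq, hεε]
    · simp [hM hlt, one_apply_ne hlt.ne']
  have hsup : ∀ i j : Fin d, (j : ℕ) = i + 1 → (ε • M - 1) i j ≠ 0 := by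
    intro i j hij
    have hlt : i < j := Fin.lt_def.2 (by omega)
    have hMij : M i j ≠ 0 := hM.apply_ne_zero_of_mul_apply_eq_zero hU₃' hij (hL hlt.ne)
      (hdiag_eq i ▸ hε0) (hU₃ i j hlt.le).ne'
    simpa [one_apply_ne hlt.ne] using mul_ne_zero hε0 hMij
  exact ⟨ε, (abs_eq zero_le_one).1 (hMdiag _), pow_eq_zero_of_forall_le hN,
    pow_pred_ne_zero hd hN hsup⟩

end SignOfDiagonal

end Matrix

theorem Matrix.ofReal_mem_spectrum_map {n : Type*} [Fintype n] [DecidableEq n]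
    {A : Matrix n n ℝ} {μ : ℝ} (hμ : μ ∈ spectrum ℝ A) :
    (μ : ℂ) ∈ spectrum ℂ (A.map ((↑) : ℝ → ℂ)) := by
  rw [Matrix.mem_spectrum_iff_isRoot_charpoly] at hμ ⊢
  rw [show A.map ((↑) : ℝ → ℂ) = A.map Complex.ofRealHom from rfl, Matrix.charpoly_map]
  exact hμ.map

section Flags

variable {d : ℕ}

namespace IsWeaklyUnipotent

variable {g : Matrix (Fin d) (Fin d) ℝ}

theorem norm_eq_one_of_mem_spectrum (hg : IsWeaklyUnipotent g) {μ : ℂ}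
    (hμ : μ ∈ spectrum ℂ (g.map ((↑) : ℝ → ℂ))) : ‖μ‖ = 1 := by
  obtain ⟨s, u, rfl, hsu, hu, P, D, hP, hs, hD⟩ := hg
  let φ : Matrix (Fin d) (Fin d) ℝ →+* Matrix (Fin d) (Fin d) ℂ := Complex.ofRealHom.mapMatrix
  have hPunit : IsUnit P := (Matrix.isUnit_iff_isUnit_det P).2 hP
  have hspec : spectrum ℂ (φ s) = Set.range D := by
    rw [← spectrum_diagonal, show φ s = hPunit.unit * Matrix.diagonal D * ↑hPunit.unit⁻¹
      by rw [Matrix.coe_units_inv]; exact hs, spectrum.units_conjugate]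
  have hsub := spectrum_mul_subset_of_isNilpotent_sub_one (R := ℂ)
    ((show Commute s u from hsu).map φ) (by simpa only [map_sub, map_one] using hu.map φ)
  obtain ⟨i, rfl⟩ := hspec ▸ hsub (by rw [← map_mul]; exact hμ)
  exact hD i

theorem abs_eq_one_of_mem_spectrum (hg : IsWeaklyUnipotent g) {μ : ℝ}
    (hμ : μ ∈ spectrum ℝ g) : |μ| = 1 := by
  simpa using hg.norm_eq_one_of_mem_spectrum (Matrix.ofReal_mem_spectrum_map hμ)

end IsWeaklyUnipotent

-- `matrixWrt B` bundled as an algebra automorphism; the two agree definitionally.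
def matrixWrtAlgEquiv (B : Module.Basis (Fin d) ℝ (Fin d → ℝ)) :
    Matrix (Fin d) (Fin d) ℝ ≃ₐ[ℝ] Matrix (Fin d) (Fin d) ℝ :=
  Matrix.toLinAlgEquiv'.trans (LinearMap.toMatrixAlgEquiv B)

theorem matrixWrtAlgEquiv_nonsing_inv (B : Module.Basis (Fin d) ℝ (Fin d → ℝ))
    {w : Matrix (Fin d) (Fin d) ℝ} (hw : IsUnit w.det) :
    matrixWrtAlgEquiv B w⁻¹ = (matrixWrtAlgEquiv B w)⁻¹ :=
  (Matrix.inv_eq_left_inv (by rw [← map_mul, Matrix.nonsing_inv_mul _ hw, map_one])).symm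

theorem matrixWrt_apply_eq_zero_of_mem_span {B : Module.Basis (Fin d) ℝ (Fin d → ℝ)}
    {w : Matrix (Fin d) (Fin d) ℝ} {s : Set (Fin d)} {i j : Fin d}
    (h : Matrix.toLin' w (B j) ∈ Submodule.span ℝ (B '' s)) (hi : i ∉ s) :
    matrixWrt B w i j = 0 := by
  rw [matrixWrt, LinearMap.toMatrix_apply]
  exact Finsupp.notMem_support_iff.1 fun hmem => hi (B.mem_span_image.1 h hmem)

theorem IsTotallyPositiveUpper.apply_pos {M : Matrix (Fin d) (Fin d) ℝ}
    (hM : IsTotallyPositiveUpper M) {i j : Fin d} (hij : i ≤ j) : 0 < M i j := by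
  simpa using hM.2 1 (fun _ => i) (fun _ => j) (Subsingleton.strictMono _)
    (Subsingleton.strictMono _) fun _ => hij

theorem MemUPos.isUnit_det {B : Module.Basis (Fin d) ℝ (Fin d → ℝ)}
    {w : Matrix (Fin d) (Fin d) ℝ} (hw : MemUPos B w) : IsUnit w.det :=
  (Matrix.isUnit_iff_isUnit_det w).1 (by simpa using hw.1.isUnit_add_one)

theorem mapFlag_mul (a b : Matrix (Fin d) (Fin d) ℝ) (F : ℕ → Submodule ℝ (Fin d → ℝ)) :
    mapFlag (a * b) F = mapFlag a (mapFlag b F) := by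
  funext i
  simp [mapFlag, Matrix.toLin'_mul, Submodule.map_comp]

theorem mapFlag_one (F : ℕ → Submodule ℝ (Fin d → ℝ)) : mapFlag 1 F = F := by
  funext i
  simp [mapFlag]

theorem toLin'_mem_of_mapFlag_eq {w : Matrix (Fin d) (Fin d) ℝ}
    {F : ℕ → Submodule ℝ (Fin d → ℝ)} (hw : mapFlag w F = F) {i : ℕ} {x : Fin d → ℝ}
    (hx : x ∈ F i) : Matrix.toLin' w x ∈ F i :=
  congrFun hw i ▸ Submodule.mem_map_of_mem hx

theorem toLin'_smul_sub_one_mem_of_mapFlag_eq {w : Matrix (Fin d) (Fin d) ℝ}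
    {F : ℕ → Submodule ℝ (Fin d → ℝ)} (hw : mapFlag w F = F) (c : ℝ) {i : ℕ} {x : Fin d → ℝ}
    (hx : x ∈ F i) : Matrix.toLin' (c • w - 1) x ∈ F i := by
  rw [map_sub, map_smul, Matrix.toLin'_one, LinearMap.sub_apply, LinearMap.smul_apply]
  exact sub_mem (Submodule.smul_mem _ c (toLin'_mem_of_mapFlag_eq hw hx)) hx

namespace IsCompleteFlag

variable {F : ℕ → Submodule ℝ (Fin d → ℝ)}

theorem eq_top (hF : IsCompleteFlag d F) {i : ℕ} (hi : d ≤ i) : F i = ⊤ := by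
  have hFd : F d = ⊤ :=
    Submodule.eq_top_of_finrank_eq (by rw [hF.2 d le_rfl, Module.finrank_fin_fun])
  exact top_le_iff.1 (hFd ▸ hF.1 hi)

theorem eq_span_Iic (hF : IsCompleteFlag d F) {B : Module.Basis (Fin d) ℝ (Fin d → ℝ)}
    (hB : ∀ j : Fin d, B j ∈ F (j + 1)) (j : Fin d) :
    F (j + 1) = Submodule.span ℝ (B '' Set.Iic j) := by
  rw [← Finset.coe_Iic]
  refine B.eq_span_image_of_finrank_eq (W := F (j + 1)) (s := Finset.Iic j) (fun m hm => ?_) ?_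
  · have hmj : (m : ℕ) + 1 ≤ j + 1 := Nat.succ_le_succ (Fin.le_def.1 (Finset.mem_Iic.1 hm))
    exact hF.1 hmj (hB m)
  · rw [Fin.card_Iic, hF.2 _ j.2]

theorem eq_span_Ici (hF : IsCompleteFlag d F) {B : Module.Basis (Fin d) ℝ (Fin d → ℝ)}
    (hB : ∀ j : Fin d, B j ∈ F (d - j)) (j : Fin d) :
    F (d - j) = Submodule.span ℝ (B '' Set.Ici j) := by
  rw [← Finset.coe_Ici]
  refine B.eq_span_image_of_finrank_eq (W := F (d - j)) (s := Finset.Ici j) (fun m hm => ?_) ?_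
  · have hjm : d - m ≤ d - j := Nat.sub_le_sub_left (Fin.le_def.1 (Finset.mem_Ici.1 hm)) d
    exact hF.1 hjm (hB m)
  · rw [Fin.card_Ici, hF.2 _ (Nat.sub_le _ _)]

theorem isUpperTriangular_matrixWrt (hF : IsCompleteFlag d F)
    {B : Module.Basis (Fin d) ℝ (Fin d → ℝ)} (hB : ∀ j : Fin d, B j ∈ F (j + 1))
    {w : Matrix (Fin d) (Fin d) ℝ} (hw : mapFlag w F = F) :
    (matrixWrt B w).IsUpperTriangular := fun _ j hji =>
  matrixWrt_apply_eq_zero_of_mem_span (hF.eq_span_Iic hB j ▸ toLin'_mem_of_mapFlag_eq hw (hB j))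
    (Set.notMem_Iic.2 hji)

theorem isLowerTriangular_matrixWrt (hF : IsCompleteFlag d F)
    {B : Module.Basis (Fin d) ℝ (Fin d → ℝ)} (hB : ∀ j : Fin d, B j ∈ F (d - j))
    {w : Matrix (Fin d) (Fin d) ℝ} (hw : mapFlag w F = F) :
    (matrixWrt B w).IsLowerTriangular := fun _ j hij =>
  matrixWrt_apply_eq_zero_of_mem_span (hF.eq_span_Ici hB j ▸ toLin'_mem_of_mapFlag_eq hw (hB j))
    (Set.notMem_Ici.2 hij)

theorem eq_of_invariant {F' : ℕ → Submodule ℝ (Fin d → ℝ)} (hF : IsCompleteFlag d F)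
    (hF' : IsCompleteFlag d F') {A : Matrix (Fin d) (Fin d) ℝ} (hA : A ^ d = 0)
    (hA' : A ^ (d - 1) ≠ 0) (hAF : ∀ i, ∀ x ∈ F i, Matrix.toLin' A x ∈ F i)
    (hAF' : ∀ i, ∀ x ∈ F' i, Matrix.toLin' A x ∈ F' i) : F = F' := by
  have hn : Module.finrank ℝ (Fin d → ℝ) = d := Module.finrank_fin_fun ℝ
  have hf : Matrix.toLinAlgEquiv' A ^ Module.finrank ℝ (Fin d → ℝ) = 0 := by
    rw [hn, ← map_pow, hA, map_zero]
  have hf' : Matrix.toLinAlgEquiv' A ^ (Module.finrank ℝ (Fin d → ℝ) - 1) ≠ 0 := by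
    rwa [hn, ← map_pow, Ne, map_eq_zero_iff _ Matrix.toLinAlgEquiv'.injective]
  funext i
  rcases le_or_gt i d with hi | hi
  · rw [Module.End.eq_ker_pow_finrank_of_invariant hf hf' (hAF i),
      Module.End.eq_ker_pow_finrank_of_invariant hf hf' (hAF' i), hF.2 i hi, hF'.2 i hi]
  · rw [hF.eq_top hi.le, hF'.eq_top hi.le]

end IsCompleteFlag

theorem IsCompleteFlag.mapFlag {F : ℕ → Submodule ℝ (Fin d → ℝ)} (hF : IsCompleteFlag d F)
    {g : Matrix (Fin d) (Fin d) ℝ} (hg : IsUnit g) : IsCompleteFlag d (mapFlag g F) := by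
  refine ⟨fun i j hij => Submodule.map_mono (hF.1 hij), fun i hi => ?_⟩
  have hinj : Function.Injective (Matrix.toLin' g) := Matrix.mulVec_injective_iff_isUnit.2 hg
  exact (Submodule.equivMapOfInjective _ hinj (F i)).finrank_eq.symm.trans (hF.2 i hi)

theorem exists_sign_smul_sub_one_pow_eq_zero_of_positiveQuadruple (hd : 1 ≤ d)
    {g g' : Matrix (Fin d) (Fin d) ℝ} (hgg' : g * g' = 1) (hwu : IsWeaklyUnipotent g)
    {F₁ F₂ : ℕ → Submodule ℝ (Fin d → ℝ)} (hF₁ : IsCompleteFlag d F₁)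
    (hF₂ : IsCompleteFlag d F₂) (hfix : mapFlag g F₁ = F₁)
    (hpos : PositiveQuadruple d F₁ (mapFlag g' F₂) F₂ (mapFlag g F₂)) :
    ∃ ε : ℝ, (ε = 1 ∨ ε = -1) ∧ (ε • g - 1) ^ d = 0 ∧ (ε • g - 1) ^ (d - 1) ≠ 0 := by
  obtain ⟨B, u₂, u₃, hB, hu₂, hu₃, h₂, h₃⟩ := hpos
  set F₄ := mapFlag g F₂
  set W := matrixWrtAlgEquiv B
  have hF₄ : IsCompleteFlag d F₄ := hF₂.mapFlag ⟨⟨g, g', hgg', mul_eq_one_comm.1 hgg'⟩, rfl⟩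
  have hB₁ : ∀ j : Fin d, B j ∈ F₁ (j + 1) := fun j => (hB j).1
  have hB₄ : ∀ j : Fin d, B j ∈ F₄ (d - j) := fun j => (hB j).2
  have hu₃det := hu₃.isUnit_det
  have hgu₃ : mapFlag (g * u₃) F₄ = F₄ := by rw [mapFlag_mul, h₃]
  have hconj : mapFlag (u₃⁻¹ * (g * u₃ * u₂)) F₄ = F₄ := by
    rw [mapFlag_mul] at h₂
    simp only [mapFlag_mul]
    rw [h₂, ← mapFlag_mul g, hgg', mapFlag_one, ← h₃, ← mapFlag_mul,
      Matrix.nonsing_inv_mul _ hu₃det, mapFlag_one]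
  have hM : (W g).IsUpperTriangular := hF₁.isUpperTriangular_matrixWrt hB₁ hfix
  have hU₃ : (W u₃).IsUpperTriangular := fun i j hij => hu₃.2.1 i j hij
  have hL : (W g * W u₃).IsDiag := Matrix.IsUpperTriangular.isDiag_of_isLowerTriangular
    (hM.mul hU₃) (map_mul W g u₃ ▸ hF₄.isLowerTriangular_matrixWrt hB₄ hgu₃)
  have hK : (W (u₃⁻¹ * (g * u₃ * u₂))).IsDiag := by
    refine Matrix.IsUpperTriangular.isDiag_of_isLowerTriangular ?_
      (hF₄.isLowerTriangular_matrixWrt hB₄ hconj)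
    simp only [map_mul, show W u₃⁻¹ = (W u₃)⁻¹ from matrixWrtAlgEquiv_nonsing_inv B hu₃det]
    exact hU₃.inv.mul ((hM.mul hU₃).mul fun i j hij => hu₂.2.1 i j hij)
  have hLK : W g * W u₃ * W u₂ = W u₃ * W (u₃⁻¹ * (g * u₃ * u₂)) := by
    simp only [map_mul]
    rw [← mul_assoc (W u₃), ← map_mul W u₃, Matrix.mul_nonsing_inv _ hu₃det, map_one, one_mul]
  have hdiag : ∀ i, |W g i i| = 1 := fun i =>
    hwu.abs_eq_one_of_mem_spectrum (AlgEquiv.spectrum_eq W g ▸ hM.diag_mem_spectrum i)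
  obtain ⟨ε, hε, h0, h1⟩ := Matrix.exists_sign_smul_sub_one_pow_eq_zero hd hM hdiag
    (fun _ _ => hu₂.2.apply_pos) (fun _ _ => hu₃.2.apply_pos) hU₃ hL hK hLK
  have hW : ∀ k, W ((ε • g - 1) ^ k) = (ε • W g - 1) ^ k := by simp
  refine ⟨ε, hε, ?_, ?_⟩
  · rwa [← map_eq_zero_iff W W.injective, hW]
  · rwa [Ne, ← map_eq_zero_iff W W.injective, hW]

end Flags

/-- Let `g ∈ SL(d, ℝ)` be weakly unipotent, and suppose there are complete flags `F₁, F₂`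
with `g(F₁) = F₁` and `(F₁, g⁻¹(F₂), F₂, g(F₂))` positive. Then `g = ±u` for a unipotent
`u` with a single Jordan block, and `F₁` is the unique complete flag fixed by `g`. -/
theorem weaklyUnipotent_fixed_flag_unique
    (d : ℕ) (hd : 1 ≤ d) (g : Matrix.SpecialLinearGroup (Fin d) ℝ)
    (hwu : IsWeaklyUnipotent (g : Matrix (Fin d) (Fin d) ℝ))
    (F₁ F₂ : ℕ → Submodule ℝ (Fin d → ℝ))
    (hF₁ : IsCompleteFlag d F₁) (hF₂ : IsCompleteFlag d F₂)
    (hfix : mapFlag (g : Matrix (Fin d) (Fin d) ℝ) F₁ = F₁)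
    (hpos : PositiveQuadruple d F₁
      (mapFlag ((g⁻¹ : Matrix.SpecialLinearGroup (Fin d) ℝ) : Matrix (Fin d) (Fin d) ℝ) F₂)
      F₂
      (mapFlag (g : Matrix (Fin d) (Fin d) ℝ) F₂)) :
    (∃ ε : ℝ, (ε = 1 ∨ ε = -1) ∧
      IsNilpotent (ε • (g : Matrix (Fin d) (Fin d) ℝ) - 1) ∧
      (ε • (g : Matrix (Fin d) (Fin d) ℝ) - 1) ^ (d - 1) ≠ 0) ∧
    ∀ F : ℕ → Submodule ℝ (Fin d → ℝ), IsCompleteFlag d F →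
      mapFlag (g : Matrix (Fin d) (Fin d) ℝ) F = F → F = F₁ := by
  have hgg' : (g : Matrix (Fin d) (Fin d) ℝ) *
      ((g⁻¹ : Matrix.SpecialLinearGroup (Fin d) ℝ) : Matrix (Fin d) (Fin d) ℝ) = 1 := by
    rw [← Matrix.SpecialLinearGroup.coe_mul, mul_inv_cancel, Matrix.SpecialLinearGroup.coe_one]
  obtain ⟨ε, hε, hnil, hpow⟩ :=
    exists_sign_smul_sub_one_pow_eq_zero_of_positiveQuadruple hd hgg' hwu hF₁ hF₂ hfix hpos
  refine ⟨⟨ε, hε, ⟨d, hnil⟩, hpow⟩, fun F hF hgF => ?_⟩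
  exact hF.eq_of_invariant hF₁ hnil hpow
    (fun _ _ => toLin'_smul_sub_one_mem_of_mapFlag_eq hgF ε)
    (fun _ _ => toLin'_smul_sub_one_mem_of_mapFlag_eq hfix ε)

end
end

section
/- Let V be a finite-dimensional real vector space with a norm, decomposed as V = V₁ ⊕ V₂, and let φ = [[A, B],[C, D]] be an invertible linear map written in block form relative to this decomposition. Suppose A and D are invertible and max{‖A⁻¹B‖, ‖D⁻¹C‖, ‖A‖·‖D⁻¹‖} < 1/3 (operator norms). Then the graph transform ψ(f) = (B + A f)(D + C f)⁻¹ is well defined on the set R₁ = {f ∈ Hom(V₂, V₁) : ‖f‖ < 1}, maps R₁ into R_{2/3} = {f : ‖f‖ ≤ 2/3}, and is Lipschitz with constant 5/6: ‖ψ(f₁) − ψ(f₂)‖ ≤ (5/6)‖f₁ − f₂‖ for all f₁, f₂ ∈ R₁. -/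
/-!
Since `D + C f = D (1 + D⁻¹C f)`, the graph transform factors as `ψ(f) = A g(f) D⁻¹`, where
`g(f) = (A⁻¹B + f)(1 + D⁻¹C f)⁻¹` is the graph transform of the normalised block map
`[[1, A⁻¹B], [D⁻¹C, 1]]`. As `‖D⁻¹C f‖ ≤ 1/3`, `‖(1 + D⁻¹C f)⁻¹‖ ≤ 3/2`, so `‖g(f)‖ ≤ 2`, and the
identity `g(f₁) - g(f₂) = (1 - g(f₂) D⁻¹C)(f₁ - f₂)(1 + D⁻¹C f₁)⁻¹` makes `g` Lipschitz with
constant `(1 + 2/3) · 3/2 = 5/2`. Multiplying by `‖A‖‖D⁻¹‖ < 1/3` gives the bounds `2/3` and `5/6`.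
-/

open ContinuousLinearMap
open scoped Ring

section NormedRing

variable {R : Type*} [NormedRing R]

theorem isUnit_one_add_of_norm_lt_one [HasSummableGeomSeries R] {t : R} (ht : ‖t‖ < 1) :
    IsUnit (1 + t) := by
  simpa using isUnit_one_sub_of_norm_lt_one (x := -t) (by rwa [norm_neg])

theorem norm_inverse_one_add_le (h1 : ‖(1 : R)‖ ≤ 1) {t : R} (hu : IsUnit (1 + t))
    (ht : ‖t‖ < 1) : ‖(1 + t)⁻¹ʳ‖ ≤ (1 - ‖t‖)⁻¹ := by
  set u := (1 + t)⁻¹ʳ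
  have hu_eq : u = 1 - t * u := by
    have := Ring.mul_inverse_cancel _ hu
    rw [add_mul, one_mul] at this
    exact eq_sub_of_add_eq this
  have hu_le : ‖u‖ ≤ 1 + ‖t‖ * ‖u‖ :=
    calc ‖u‖ = ‖1 - t * u‖ := congrArg _ hu_eq
      _ ≤ ‖(1 : R)‖ + ‖t‖ * ‖u‖ := (norm_sub_le _ _).trans (by gcongr; exact norm_mul_le _ _)
      _ ≤ 1 + ‖t‖ * ‖u‖ := by gcongr
  rw [← one_div, le_div_iff₀ (by linarith)]
  linarith

end NormedRing

section GraphTransform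

variable {𝕜 : Type*} [NontriviallyNormedField 𝕜]
  {V₁ V₂ : Type*} [NormedAddCommGroup V₁] [NormedSpace 𝕜 V₁]
  [NormedAddCommGroup V₂] [NormedSpace 𝕜 V₂]

-- `Graph (graphTransform A B C D f) = φ (Graph f)` for `φ = [[A, B], [C, D]]` whenever
-- `D + C ∘L f` is invertible; otherwise `⁻¹ʳ` returns `0`.
noncomputable def graphTransform (A : V₁ →L[𝕜] V₁) (B : V₂ →L[𝕜] V₁) (C : V₁ →L[𝕜] V₂)
    (D : V₂ →L[𝕜] V₂) (f : V₂ →L[𝕜] V₁) : V₂ →L[𝕜] V₁ :=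
  (B + A ∘L f) ∘L (D + C ∘L f)⁻¹ʳ

theorem graphTransform_sub_graphTransform (A : V₁ →L[𝕜] V₁) (B : V₂ →L[𝕜] V₁)
    (C : V₁ →L[𝕜] V₂) (D : V₂ →L[𝕜] V₂) {f₁ f₂ : V₂ →L[𝕜] V₁}
    (h₁ : IsUnit (D + C ∘L f₁)) (h₂ : IsUnit (D + C ∘L f₂)) :
    graphTransform A B C D f₁ - graphTransform A B C D f₂ =
      (A - graphTransform A B C D f₂ ∘L C) ∘L (f₁ - f₂) ∘L (D + C ∘L f₁)⁻¹ʳ := by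
  set J₁ := (D + C ∘L f₁)⁻¹ʳ
  set J₂ := (D + C ∘L f₂)⁻¹ʳ
  have hJ : J₂ * (C ∘L (f₁ - f₂)) * J₁ = J₂ - J₁ := by
    have e₁ := Ring.mul_inverse_cancel _ h₁
    have e₂ := Ring.inverse_mul_cancel _ h₂
    rw [comp_sub]
    calc J₂ * (C ∘L f₁ - C ∘L f₂) * J₁
        = J₂ * ((D + C ∘L f₁) * J₁) - (J₂ * (D + C ∘L f₂)) * J₁ := by noncomm_ring
      _ = J₂ - J₁ := by rw [e₁, e₂]; noncomm_ring
  have hsplit : (A - graphTransform A B C D f₂ ∘L C) ∘L (f₁ - f₂) ∘L J₁ =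
      A ∘L (f₁ - f₂) ∘L J₁ - (B + A ∘L f₂) ∘L (J₂ * (C ∘L (f₁ - f₂)) * J₁) := by
    simp only [graphTransform, sub_comp, mul_def, comp_assoc]; rfl
  rw [hsplit, hJ]
  simp only [graphTransform, comp_sub, sub_comp, add_comp, comp_assoc]
  abel

theorem add_comp_eq_mul_one_add (C : V₁ →L[𝕜] V₂) (D : V₂ ≃L[𝕜] V₂) (f : V₂ →L[𝕜] V₁) :
    (D : V₂ →L[𝕜] V₂) + C ∘L f = D * (1 + ((D.symm : V₂ →L[𝕜] V₂) ∘L C) ∘L f) := by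
  ext x; simp

theorem graphTransform_eq_comp (A : V₁ ≃L[𝕜] V₁) (B : V₂ →L[𝕜] V₁) (C : V₁ →L[𝕜] V₂)
    (D : V₂ ≃L[𝕜] V₂) (f : V₂ →L[𝕜] V₁) :
    graphTransform A B C D f = (A : V₁ →L[𝕜] V₁) ∘L
      graphTransform 1 ((A.symm : V₁ →L[𝕜] V₁) ∘L B) ((D.symm : V₂ →L[𝕜] V₂) ∘L C) 1 f ∘L
        (D.symm : V₂ →L[𝕜] V₂) := by
  have hD : IsUnit (D : V₂ →L[𝕜] V₂) := D.toUnit.isUnit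
  rw [graphTransform, graphTransform, add_comp_eq_mul_one_add, Ring.inverse_mul (Or.inl hD),
    ringInverse_equiv, inverse_equiv]
  ext x
  simp

theorem isUnit_add_comp (C : V₁ →L[𝕜] V₂) (D : V₂ ≃L[𝕜] V₂) {f : V₂ →L[𝕜] V₁}
    (h : IsUnit (1 + ((D.symm : V₂ →L[𝕜] V₂) ∘L C) ∘L f)) :
    IsUnit ((D : V₂ →L[𝕜] V₂) + C ∘L f) := by
  rw [add_comp_eq_mul_one_add]
  exact D.toUnit.isUnit.mul h

section Normalized

variable {B : V₂ →L[𝕜] V₁} {C : V₁ →L[𝕜] V₂} {f f₁ f₂ : V₂ →L[𝕜] V₁}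

theorem opNorm_comp_le_of_norm_le_one {c : ℝ} (hC : ‖C‖ ≤ c) (hf : ‖f‖ ≤ 1) :
    ‖C ∘L f‖ ≤ c :=
  (opNorm_comp_le C f).trans (by nlinarith [norm_nonneg C, norm_nonneg f])

variable [CompleteSpace V₂]

theorem isUnit_one_add_comp (hC : ‖C‖ ≤ 1 / 3) (hf : ‖f‖ ≤ 1) : IsUnit (1 + C ∘L f) :=
  isUnit_one_add_of_norm_lt_one ((opNorm_comp_le_of_norm_le_one hC hf).trans_lt (by norm_num))

theorem norm_inverse_one_add_comp_le (hC : ‖C‖ ≤ 1 / 3) (hf : ‖f‖ ≤ 1) :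
    ‖(1 + C ∘L f)⁻¹ʳ‖ ≤ 3 / 2 := by
  have ht := opNorm_comp_le_of_norm_le_one hC hf
  calc ‖(1 + C ∘L f)⁻¹ʳ‖ ≤ (1 - ‖C ∘L f‖)⁻¹ :=
        norm_inverse_one_add_le norm_id_le (isUnit_one_add_comp hC hf) (by linarith)
    _ ≤ (1 - 1 / 3)⁻¹ := by gcongr
    _ = 3 / 2 := by norm_num

theorem norm_graphTransform_one_le (hB : ‖B‖ ≤ 1 / 3) (hC : ‖C‖ ≤ 1 / 3) (hf : ‖f‖ ≤ 1) :
    ‖graphTransform 1 B C 1 f‖ ≤ 2 := by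
  have hBf : ‖B + 1 ∘L f‖ ≤ 4 / 3 := by
    rw [one_def, id_comp]
    linarith [norm_add_le B f]
  calc ‖graphTransform 1 B C 1 f‖ ≤ ‖B + 1 ∘L f‖ * ‖(1 + C ∘L f)⁻¹ʳ‖ := opNorm_comp_le _ _
    _ ≤ 4 / 3 * (3 / 2) := by
        gcongr
        exact norm_inverse_one_add_comp_le hC hf
    _ = 2 := by norm_num

theorem norm_graphTransform_one_sub_le (hB : ‖B‖ ≤ 1 / 3) (hC : ‖C‖ ≤ 1 / 3)
    (hf₁ : ‖f₁‖ ≤ 1) (hf₂ : ‖f₂‖ ≤ 1) :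
    ‖graphTransform 1 B C 1 f₁ - graphTransform 1 B C 1 f₂‖ ≤ 5 / 2 * ‖f₁ - f₂‖ := by
  set g₂ := graphTransform 1 B C 1 f₂
  have hg₂C : ‖1 - g₂ ∘L C‖ ≤ 5 / 3 :=
    calc ‖1 - g₂ ∘L C‖ ≤ ‖(1 : V₁ →L[𝕜] V₁)‖ + ‖g₂‖ * ‖C‖ :=
          (norm_sub_le _ _).trans (by gcongr; exact opNorm_comp_le _ _)
      _ ≤ 1 + 2 * (1 / 3) := by
          gcongr
          exacts [norm_id_le, norm_graphTransform_one_le hB hC hf₂]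
      _ = 5 / 3 := by norm_num
  rw [graphTransform_sub_graphTransform _ _ _ _ (isUnit_one_add_comp hC hf₁)
    (isUnit_one_add_comp hC hf₂)]
  calc ‖(1 - g₂ ∘L C) ∘L (f₁ - f₂) ∘L (1 + C ∘L f₁)⁻¹ʳ‖
      ≤ ‖1 - g₂ ∘L C‖ * (‖f₁ - f₂‖ * ‖(1 + C ∘L f₁)⁻¹ʳ‖) :=
        (opNorm_comp_le _ _).trans (by gcongr; exact opNorm_comp_le _ _)
    _ ≤ 5 / 3 * (‖f₁ - f₂‖ * (3 / 2)) := by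
        gcongr
        exact norm_inverse_one_add_comp_le hC hf₁
    _ = 5 / 2 * ‖f₁ - f₂‖ := by ring

end Normalized

end GraphTransform

theorem graph_transform_contraction_general
    {V₁ V₂ : Type*}
    [NormedAddCommGroup V₁] [NormedSpace ℝ V₁]
    [NormedAddCommGroup V₂] [NormedSpace ℝ V₂] [FiniteDimensional ℝ V₂]
    (A : V₁ ≃L[ℝ] V₁) (B : V₂ →L[ℝ] V₁) (C : V₁ →L[ℝ] V₂) (D : V₂ ≃L[ℝ] V₂)
    (hAB : ‖(A.symm : V₁ →L[ℝ] V₁).comp B‖ < 1 / 3)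
    (hDC : ‖(D.symm : V₂ →L[ℝ] V₂).comp C‖ < 1 / 3)
    (hAD : ‖(A : V₁ →L[ℝ] V₁)‖ * ‖(D.symm : V₂ →L[ℝ] V₂)‖ < 1 / 3) :
    (∀ f : V₂ →L[ℝ] V₁, ‖f‖ < 1 →
      IsUnit ((D : V₂ →L[ℝ] V₂) + C.comp f) ∧
      ‖(B + (A : V₁ →L[ℝ] V₁).comp f).comp
          (Ring.inverse ((D : V₂ →L[ℝ] V₂) + C.comp f))‖ ≤ 2 / 3) ∧
    ∀ f₁ f₂ : V₂ →L[ℝ] V₁, ‖f₁‖ < 1 → ‖f₂‖ < 1 →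
      ‖(B + (A : V₁ →L[ℝ] V₁).comp f₁).comp
          (Ring.inverse ((D : V₂ →L[ℝ] V₂) + C.comp f₁)) -
        (B + (A : V₁ →L[ℝ] V₁).comp f₂).comp
          (Ring.inverse ((D : V₂ →L[ℝ] V₂) + C.comp f₂))‖ ≤ (5 / 6) * ‖f₁ - f₂‖ := by
  have := FiniteDimensional.complete ℝ V₂
  set g := graphTransform 1 ((A.symm : V₁ →L[ℝ] V₁) ∘L B) ((D.symm : V₂ →L[ℝ] V₂) ∘L C) 1
  have hψ (f : V₂ →L[ℝ] V₁) : graphTransform (A : V₁ →L[ℝ] V₁) B C D f =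
      (A : V₁ →L[ℝ] V₁) ∘L g f ∘L (D.symm : V₂ →L[ℝ] V₂) :=
    graphTransform_eq_comp A B C D f
  have hconj (X : V₂ →L[ℝ] V₁) :
      ‖(A : V₁ →L[ℝ] V₁) ∘L X ∘L (D.symm : V₂ →L[ℝ] V₂)‖ ≤ 1 / 3 * ‖X‖ :=
    calc _ ≤ ‖(A : V₁ →L[ℝ] V₁)‖ * (‖X‖ * ‖(D.symm : V₂ →L[ℝ] V₂)‖) :=
          (opNorm_comp_le _ _).trans (by gcongr; exact opNorm_comp_le _ _)
      _ ≤ 1 / 3 * ‖X‖ := by nlinarith [norm_nonneg X]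
  refine ⟨fun f hf => ⟨isUnit_add_comp C D (isUnit_one_add_comp hDC.le hf.le), ?_⟩,
    fun f₁ f₂ hf₁ hf₂ => ?_⟩
  · change ‖graphTransform (A : V₁ →L[ℝ] V₁) B C D f‖ ≤ 2 / 3
    calc _ ≤ 1 / 3 * ‖g f‖ := hψ f ▸ hconj (g f)
      _ ≤ 1 / 3 * 2 := by gcongr; exact norm_graphTransform_one_le hAB.le hDC.le hf.le
      _ = 2 / 3 := by norm_num
  · change ‖graphTransform (A : V₁ →L[ℝ] V₁) B C D f₁ -
      graphTransform (A : V₁ →L[ℝ] V₁) B C D f₂‖ ≤ 5 / 6 * ‖f₁ - f₂‖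
    rw [hψ, hψ, ← comp_sub, ← sub_comp]
    calc _ ≤ 1 / 3 * ‖g f₁ - g f₂‖ := hconj _
      _ ≤ 1 / 3 * (5 / 2 * ‖f₁ - f₂‖) := by
          gcongr
          exact norm_graphTransform_one_sub_le hAB.le hDC.le hf₁.le hf₂.le
      _ = 5 / 6 * ‖f₁ - f₂‖ := by ring

/-- The graph transform. Let `V = V₁ ⊕ V₂` be a finite-dimensional normed real vector
space and `φ = [[A, B],[C, D]]` an invertible linear map in block form, with `A`, `D`
invertible and `max{‖A⁻¹B‖, ‖D⁻¹C‖, ‖A‖·‖D⁻¹‖} < 1/3`. Then for every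
`f ∈ Hom(V₂, V₁)` with `‖f‖ < 1` the operator `D + C f` is invertible, the graph
transform `ψ(f) = (B + A f)(D + C f)⁻¹` satisfies `‖ψ(f)‖ ≤ 2/3`, and `ψ` is Lipschitz
with constant `5/6` on the open unit ball of `Hom(V₂, V₁)`. -/
theorem graph_transform_contraction
    {V₁ V₂ : Type*}
    [NormedAddCommGroup V₁] [NormedSpace ℝ V₁] [FiniteDimensional ℝ V₁]
    [NormedAddCommGroup V₂] [NormedSpace ℝ V₂] [FiniteDimensional ℝ V₂]
    (A : V₁ ≃L[ℝ] V₁) (B : V₂ →L[ℝ] V₁) (C : V₁ →L[ℝ] V₂) (D : V₂ ≃L[ℝ] V₂)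
    (hAB : ‖(A.symm : V₁ →L[ℝ] V₁).comp B‖ < 1 / 3)
    (hDC : ‖(D.symm : V₂ →L[ℝ] V₂).comp C‖ < 1 / 3)
    (hAD : ‖(A : V₁ →L[ℝ] V₁)‖ * ‖(D.symm : V₂ →L[ℝ] V₂)‖ < 1 / 3) :
    (∀ f : V₂ →L[ℝ] V₁, ‖f‖ < 1 →
      IsUnit ((D : V₂ →L[ℝ] V₂) + C.comp f) ∧
      ‖(B + (A : V₁ →L[ℝ] V₁).comp f).comp
          (Ring.inverse ((D : V₂ →L[ℝ] V₂) + C.comp f))‖ ≤ 2 / 3) ∧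
    ∀ f₁ f₂ : V₂ →L[ℝ] V₁, ‖f₁‖ < 1 → ‖f₂‖ < 1 →
      ‖(B + (A : V₁ →L[ℝ] V₁).comp f₁).comp
          (Ring.inverse ((D : V₂ →L[ℝ] V₂) + C.comp f₁)) -
        (B + (A : V₁ →L[ℝ] V₁).comp f₂).comp
          (Ring.inverse ((D : V₂ →L[ℝ] V₂) + C.comp f₂))‖ ≤ (5 / 6) * ‖f₁ - f₂‖ :=
  graph_transform_contraction_general A B C D hAB hDC hAD
end

section
/- Let σ, κ : [0, ∞) → ℝ be such that there exist constants B ≥ 1, b > 0, R > 0, T₁ ≥ 0 with the following contraction-concatenation property for a function q(v, t) measuring contraction of a flow: if a trajectory spends times [0, s₁] and [s₂, t] in a 'thin' region where q multiplies by at most B e^{−b·(time)}, and time [s₁, s₂] in a compact region where either q multiplies by at most 1/(2B²) (if s₂ − s₁ ≥ T₁) or by at most R e^{s₂ − s₁} (if s₂ − s₁ < T₁), then for every t ≥ T where T satisfies B² R e^{T₁(1+b) − bT} ≤ 1/2 and B e^{−bT} ≤ 1/2, the total multiplier over [0, t] is at most 1/2. Consequently, iterating gives a uniform exponential bound: the multiplier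 over [0, t] is at most A e^{−a t} with a = log(2)/T for a suitable constant A. -/
/-! If the trajectory spends time `d` in the compact part, the thin parts contribute
`B² e^{-b(t - d)}`. A long compact stay (`d ≥ T₁`) contributes `1/(2B²)`, which cancels `B²`;
a short one contributes at most `R e^{T₁}` but leaves at least `T - T₁` in the thin parts, which
is what the choice of `T` pays for. For the exponential bound, `q t ≤ q T · q (t - T)` halves the
bound on `q` every `T` units of time. -/

open Real

section Gluing

variable {B b R m d t T₁ T : ℝ}

theorem thin_mul_mul_thin_eq (B b m s₁ s₂ t : ℝ) :
    B * exp (-b * s₁) * m * (B * exp (-b * (t - s₂))) =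
      B ^ 2 * m * exp (-b * (t - (s₂ - s₁))) := by
  rw [show -b * (t - (s₂ - s₁)) = -b * s₁ + -b * (t - s₂) by ring, exp_add]
  ring

theorem glued_multiplier_le_half_of_long_stay (hb : 0 ≤ b) (hdt : d ≤ t) (hm₀ : 0 ≤ m)
    (hm : m ≤ 1 / (2 * B ^ 2)) : B ^ 2 * m * exp (-b * (t - d)) ≤ 1 / 2 :=
  calc B ^ 2 * m * exp (-b * (t - d))
      ≤ B ^ 2 * m := mul_le_of_le_one_right (by positivity) (exp_le_one_iff.2 (by nlinarith))
    _ ≤ B ^ 2 * (1 / (2 * B ^ 2)) := by gcongr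
    _ = 1 / 2 * (B ^ 2 / B ^ 2) := by ring
    _ ≤ 1 / 2 := mul_le_of_le_one_right (by norm_num) (div_self_le_one _)

theorem glued_multiplier_le_of_short_stay (hb : 0 ≤ b) (hR : 0 ≤ R) (hdT₁ : d ≤ T₁) (hTt : T ≤ t)
    (hm : m ≤ R * exp d) :
    B ^ 2 * m * exp (-b * (t - d)) ≤ B ^ 2 * R * exp (T₁ * (1 + b) - b * T) :=
  calc B ^ 2 * m * exp (-b * (t - d))
      ≤ B ^ 2 * (R * exp d) * exp (-b * (t - d)) := by gcongr
    _ = B ^ 2 * R * exp (d * (1 + b) - b * t) := by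
      rw [show d * (1 + b) - b * t = d + -b * (t - d) by ring, exp_add]
      ring
    _ ≤ B ^ 2 * R * exp (T₁ * (1 + b) - b * T) := by gcongr

end Gluing

section ExponentialDecay

variable {q : ℝ → ℝ} {A c T : ℝ}

theorem le_mul_pow_of_submultiplicative (hq₀ : ∀ t, 0 ≤ q t)
    (hq : ∀ s t : ℝ, 0 ≤ s → 0 ≤ t → q (s + t) ≤ q s * q t) (hT : 0 ≤ T)
    (hqc : ∀ t, T ≤ t → q t ≤ c) (hqA : ∀ t ∈ Set.Icc 0 T, q t ≤ A) (hcA : c ≤ A) :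
    ∀ n : ℕ, ∀ t, n * T ≤ t → q t ≤ A * c ^ n := by
  intro n
  induction n with
  | zero =>
    intro t ht
    rw [Nat.cast_zero, zero_mul] at ht
    rw [pow_zero, mul_one]
    rcases le_total t T with htT | hTt
    · exact hqA t ⟨ht, htT⟩
    · exact (hqc t hTt).trans hcA
  | succ n ih =>
    intro t ht
    have hnt : n * T ≤ t - T := by push_cast at ht; linarith
    have hc : 0 ≤ c := (hq₀ T).trans (hqc T le_rfl)
    calc q t = q (T + (t - T)) := by rw [add_sub_cancel]
      _ ≤ q T * q (t - T) := hq T (t - T) hT ((by positivity : (0 : ℝ) ≤ n * T).trans hnt)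
      _ ≤ c * (A * c ^ n) := mul_le_mul (hqc T le_rfl) (ih _ hnt) (hq₀ _) hc
      _ = A * c ^ (n + 1) := by ring

theorem pow_floor_div_le (hc₀ : 0 < c) (hc₁ : c ≤ 1) (t : ℝ) :
    c ^ ⌊t / T⌋₊ ≤ c⁻¹ * exp (log c / T * t) := by
  have hfloor : t / T - 1 ≤ ⌊t / T⌋₊ := by linarith [Nat.lt_floor_add_one (t / T)]
  calc c ^ ⌊t / T⌋₊ = c ^ (⌊t / T⌋₊ : ℝ) := (rpow_natCast c _).symm
    _ ≤ c ^ (t / T - 1) := rpow_le_rpow_of_exponent_ge hc₀ hc₁ hfloor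
    _ = c⁻¹ * exp (log c / T * t) := by
      rw [rpow_sub_one hc₀.ne', rpow_def_of_pos hc₀]
      ring_nf

theorem exists_le_mul_exp_of_submultiplicative (hc₀ : 0 < c) (hc₁ : c ≤ 1) (hT : 0 < T)
    (hq₀ : ∀ t, 0 ≤ q t) (hq : ∀ s t : ℝ, 0 ≤ s → 0 ≤ t → q (s + t) ≤ q s * q t)
    (hqc : ∀ t, T ≤ t → q t ≤ c) (hqA : ∀ t ∈ Set.Icc 0 T, q t ≤ A) :
    ∃ A' : ℝ, 0 < A' ∧ ∀ t, 0 ≤ t → q t ≤ A' * exp (log c / T * t) := by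
  set A₁ := max A 1
  have hA₁ : 0 < A₁ := zero_lt_one.trans_le (le_max_right _ _)
  have hbound := le_mul_pow_of_submultiplicative hq₀ hq hT.le hqc
    (fun t ht ↦ (hqA t ht).trans (le_max_left _ _)) (hc₁.trans (le_max_right _ _))
  refine ⟨A₁ * c⁻¹, by positivity, fun t ht ↦ ?_⟩
  have hfloor : ⌊t / T⌋₊ * T ≤ t := by
    rw [← le_div_iff₀ hT]
    exact Nat.floor_le (by positivity)
  calc q t ≤ A₁ * c ^ ⌊t / T⌋₊ := hbound _ t hfloor
    _ ≤ A₁ * (c⁻¹ * exp (log c / T * t)) := by gcongr; exact pow_floor_div_le hc₀ hc₁ t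
    _ = A₁ * c⁻¹ * exp (log c / T * t) := by ring

end ExponentialDecay

theorem contraction_gluing_general
    (B b R T₁ T : ℝ) (hb : 0 < b) (hR : 0 < R) (hT : 0 < T)
    (hT2 : B ^ 2 * R * Real.exp (T₁ * (1 + b) - b * T) ≤ 1 / 2) :
    (∀ t s₁ s₂ m : ℝ, T ≤ t → 0 ≤ s₁ → s₁ ≤ s₂ → s₂ ≤ t → 0 ≤ m →
      (T₁ ≤ s₂ - s₁ → m ≤ 1 / (2 * B ^ 2)) →
      (s₂ - s₁ < T₁ → m ≤ R * Real.exp (s₂ - s₁)) →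
      (B * Real.exp (-b * s₁)) * m * (B * Real.exp (-b * (t - s₂))) ≤ 1 / 2) ∧
    ∀ q : ℝ → ℝ,
      (∀ t, 0 ≤ q t) →
      (∀ s t : ℝ, 0 ≤ s → 0 ≤ t → q (s + t) ≤ q s * q t) →
      (∀ t, T ≤ t → q t ≤ 1 / 2) →
      (∃ A₀ : ℝ, ∀ t ∈ Set.Icc (0 : ℝ) T, q t ≤ A₀) →
      ∃ A : ℝ, 0 < A ∧ ∀ t : ℝ, 0 ≤ t →
        q t ≤ A * Real.exp (-(Real.log 2 / T) * t) := by
  refine ⟨fun t s₁ s₂ m ht hs₁ _ hs₂ hm hlong hshort ↦ ?_, fun q hq₀ hq hqT ⟨A₀, hA₀⟩ ↦ ?_⟩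
  · rw [thin_mul_mul_thin_eq]
    rcases le_or_gt T₁ (s₂ - s₁) with hd | hd
    · exact glued_multiplier_le_half_of_long_stay hb.le (by linarith) hm (hlong hd)
    · exact (glued_multiplier_le_of_short_stay hb.le hR.le hd.le ht (hshort hd)).trans hT2
  · have hrate : Real.log (1 / 2) / T = -(Real.log 2 / T) := by
      rw [one_div, Real.log_inv, neg_div]
    simpa only [hrate] using
      exists_le_mul_exp_of_submultiplicative (by norm_num) (by norm_num) hT hq₀ hq hqT hA₀

/-- Quantitative gluing lemma for contraction multipliers. Let `B ≥ 1`, `b > 0`, `R > 0`,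
`T₁ ≥ 0` and choose `T > 0` with `B² R e^{T₁(1+b) − bT} ≤ 1/2` and `B e^{−bT} ≤ 1/2`.
Then: (a) for every `t ≥ T` and `0 ≤ s₁ ≤ s₂ ≤ t`, and any `m ≥ 0` with
`m ≤ 1/(2B²)` if `s₂ − s₁ ≥ T₁` and `m ≤ R e^{s₂−s₁}` if `s₂ − s₁ < T₁`, the total
multiplier `(B e^{−b s₁}) · m · (B e^{−b(t−s₂)})` is at most `1/2`; and (b) consequently,
iterating: any nonnegative submultiplicative multiplier function `q` with `q t ≤ 1/2` for
all `t ≥ T`, bounded on `[0, T]`, satisfies a uniform exponential bound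
`q t ≤ A e^{−at}` with `a = log 2 / T` for a suitable constant `A`. -/
theorem contraction_gluing
    (B b R T₁ T : ℝ) (hB : 1 ≤ B) (hb : 0 < b) (hR : 0 < R) (hT₁ : 0 ≤ T₁) (hT : 0 < T)
    (hT2 : B ^ 2 * R * Real.exp (T₁ * (1 + b) - b * T) ≤ 1 / 2)
    (hT3 : B * Real.exp (-b * T) ≤ 1 / 2) :
    (∀ t s₁ s₂ m : ℝ, T ≤ t → 0 ≤ s₁ → s₁ ≤ s₂ → s₂ ≤ t → 0 ≤ m →
      (T₁ ≤ s₂ - s₁ → m ≤ 1 / (2 * B ^ 2)) →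
      (s₂ - s₁ < T₁ → m ≤ R * Real.exp (s₂ - s₁)) →
      (B * Real.exp (-b * s₁)) * m * (B * Real.exp (-b * (t - s₂))) ≤ 1 / 2) ∧
    ∀ q : ℝ → ℝ,
      (∀ t, 0 ≤ q t) →
      (∀ s t : ℝ, 0 ≤ s → 0 ≤ t → q (s + t) ≤ q s * q t) →
      (∀ t, T ≤ t → q t ≤ 1 / 2) →
      (∃ A₀ : ℝ, ∀ t ∈ Set.Icc (0 : ℝ) T, q t ≤ A₀) →
      ∃ A : ℝ, 0 < A ∧ ∀ t : ℝ, 0 ≤ t →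
        q t ≤ A * Real.exp (-(Real.log 2 / T) * t) :=
  contraction_gluing_general B b R T₁ T hb hR hT hT2
end
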